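/- arXiv:1802.09486 — 6 statements merged into one kernel-verified Lean document; each statement's English description precedes it below -/
import Mathlib

section
/- Let m ≥ 1 be a natural number. The function Λ̄_m : ℂ^m → ℝ, which maps each tuple M = (a_0, …, a_{m−1}) ∈ ℂ^m to the maximum of the real parts of the roots of the polynomial λ^m − a_{m−1}λ^{m−1} − ⋯ − a_1λ − a_0, is continuous on ℂ^m. -/
open Polynomial

/-- The characteristic polynomial `λ^m - a_{m-1} λ^{m-1} - ⋯ - a_1 λ - a_0`
associated to the tuple of coefficients `M = (a_0, …, a_{m-1}) ∈ ℂ^m`. -/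
noncomputable def charPoly (m : ℕ) (M : Fin m → ℂ) : Polynomial ℂ :=
  X ^ m - ∑ j : Fin m, C (M j) * X ^ (j : ℕ)

/-- `Λ̄_m(M)`: the maximum of the real parts of the roots of `charPoly m M`
(a well-defined real number when `m ≥ 1`, since then the polynomial has roots). -/
noncomputable def maxReRoots (m : ℕ) (M : Fin m → ℂ) : ℝ :=
  sSup (Complex.re '' {z : ℂ | z ∈ (charPoly m M).roots})

/-!
The Vieta map `r ↦ M`, sending a tuple of roots to the coefficients of `∏ i, (X - r i)`,
is continuous, surjective because `ℂ` is algebraically closed, and proper by Cauchy's bound on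
the roots; hence it is a quotient map. Composed with it, `Λ̄_m` becomes `r ↦ max_i Re (r i)`,
which is continuous.
-/

theorem Multiset.exists_fin_map_eq {α : Type*} (s : Multiset α) {n : ℕ} (hn : card s = n) :
    ∃ f : Fin n → α, Finset.univ.val.map f = s := by
  obtain ⟨l, rfl⟩ : ∃ l : List α, (l : Multiset α) = s :=
    ⟨s.toList, Multiset.coe_toList s⟩
  rw [Multiset.coe_card] at hn
  subst hn
  exact ⟨l.get, by rw [Fin.univ_val_map, List.ofFn_get]⟩

theorem continuous_coeff_prod_X_sub_C {ι R : Type*} [Fintype ι] [CommRing R] [TopologicalSpace R]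
    [IsTopologicalRing R] (k : ℕ) :
    Continuous fun r : ι → R => (∏ i, (X - C (r i))).coeff k := by
  -- the coefficients of `∏ i, (X - C (r i))` are polynomial functions of `r`
  have h (r : ι → R) : (∏ i, (X - C (r i))).coeff k = MvPolynomial.eval r
      ((∏ i, (X - C (MvPolynomial.X i) : (MvPolynomial ι R)[X])).coeff k) := by
    rw [← coeff_map, Polynomial.map_prod]
    simp
  simpa only [h] using MvPolynomial.continuous_eval _

theorem continuous_sSup_range {ι X : Type*} [Finite ι] [TopologicalSpace X] {f : ι → X → ℝ}
    (hf : ∀ i, Continuous (f i)) : Continuous fun x => sSup (Set.range fun i => f i x) := by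
  cases isEmpty_or_nonempty ι
  · simpa [Set.range_eq_empty] using continuous_const
  · have := Fintype.ofFinite ι
    simp only [← iSup.eq_1, ← Finset.sup'_univ_eq_ciSup]
    exact Continuous.finset_sup'_apply Finset.univ_nonempty fun i _ => hf i

namespace charPoly

variable {m : ℕ}

theorem monic (M : Fin m → ℂ) : (charPoly m M).Monic :=
  monic_X_pow_sub (degree_sum_fin_lt M)

theorem natDegree (M : Fin m → ℂ) : (charPoly m M).natDegree = m := by
  have h : degree (∑ j : Fin m, C (M j) * X ^ (j : ℕ)) < degree (X ^ m : ℂ[X]) := by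
    simpa using degree_sum_fin_lt M
  exact natDegree_eq_of_degree_eq_some
    ((degree_sub_eq_left_of_degree_lt h).trans (degree_X_pow m))

theorem coeff (M : Fin m → ℂ) (j : Fin m) : (charPoly m M).coeff j = -M j := by
  simp [charPoly, coeff_X_pow, j.2.ne, Fin.val_inj]

theorem neg_coeff_of_monic {P : ℂ[X]} (hP : P.Monic) (hd : P.natDegree = m) :
    charPoly m (fun j => -P.coeff j) = P := by
  conv_rhs => rw [hP.as_sum, hd]
  simp [charPoly, Fin.sum_univ_eq_sum_range (fun j => C (P.coeff j) * X ^ j), sub_eq_add_neg]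

end charPoly

theorem norm_lt_of_mem_roots_charPoly {m : ℕ} {M : Fin m → ℂ} {z : ℂ}
    (hz : z ∈ (charPoly m M).roots) : ‖z‖ < ‖M‖ + 1 := by
  have hbound : cauchyBound (charPoly m M) ≤ ‖M‖₊ + 1 := by
    rw [cauchyBound, (charPoly.monic M).leadingCoeff, nnnorm_one, div_one, charPoly.natDegree]
    gcongr
    refine Finset.sup_le fun j hj => ?_
    rw [Finset.mem_range] at hj
    simpa [charPoly.coeff M ⟨j, hj⟩] using nnnorm_le_pi_nnnorm M ⟨j, hj⟩
  have := (isRoot_of_mem_roots hz).norm_lt_cauchyBound (charPoly.monic M).ne_zero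
  exact_mod_cast this.trans_le hbound

noncomputable def coeffsOfRoots (m : ℕ) (r : Fin m → ℂ) : Fin m → ℂ :=
  fun j => -(∏ i, (X - C (r i))).coeff j

namespace coeffsOfRoots

variable {m : ℕ}

theorem charPoly_eq (r : Fin m → ℂ) :
    charPoly m (coeffsOfRoots m r) = ∏ i, (X - C (r i)) := by
  refine charPoly.neg_coeff_of_monic (monic_prod_of_monic _ _ fun i _ => monic_X_sub_C (r i)) ?_
  simp [natDegree_prod _ _ fun i _ => X_sub_C_ne_zero (r i)]

theorem roots_charPoly (r : Fin m → ℂ) :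
    (charPoly m (coeffsOfRoots m r)).roots = Finset.univ.val.map r := by
  rw [charPoly_eq, Finset.prod_eq_multiset_prod,
    ← roots_multiset_prod_X_sub_C (Finset.univ.val.map r), Multiset.map_map]
  rfl

theorem continuous : Continuous (coeffsOfRoots m) :=
  continuous_pi fun j => (continuous_coeff_prod_X_sub_C j).neg

theorem surjective : Function.Surjective (coeffsOfRoots m) := by
  intro M
  have hsplit := IsAlgClosed.splits (charPoly m M)
  obtain ⟨r, hr⟩ := (charPoly m M).roots.exists_fin_map_eq (n := m) <| by
    rw [splits_iff_card_roots.1 hsplit, charPoly.natDegree]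
  have hprod : ∏ i, (X - C (r i)) = charPoly m M := by
    rw [hsplit.eq_prod_roots_of_monic (charPoly.monic M), ← hr, Finset.prod_eq_multiset_prod,
      Multiset.map_map]
    rfl
  exact ⟨r, funext fun j => by simp [coeffsOfRoots, hprod, charPoly.coeff]⟩

theorem isProperMap : IsProperMap (coeffsOfRoots m) := by
  refine (isProperMap_iff_isCompact_preimage).2 ⟨continuous, fun K hK => ?_⟩
  obtain ⟨B, hB⟩ := isBounded_iff_forall_norm_le.1 hK.isBounded
  refine (isCompact_closedBall 0 (B + 1)).of_isClosed_subset
    (hK.isClosed.preimage continuous) fun r hr => ?_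
  have hB_nonneg : 0 ≤ B := (norm_nonneg _).trans (hB _ hr)
  rw [mem_closedBall_zero_iff, pi_norm_le_iff_of_nonneg (by linarith)]
  intro i
  have hroot : r i ∈ (charPoly m (coeffsOfRoots m r)).roots := by
    simp [roots_charPoly]
  linarith [norm_lt_of_mem_roots_charPoly hroot, hB _ hr]

theorem maxReRoots_eq (r : Fin m → ℂ) :
    maxReRoots m (coeffsOfRoots m r) = sSup (Set.range fun i => (r i).re) := by
  rw [maxReRoots, roots_charPoly]
  congr 1
  ext x
  simp

end coeffsOfRoots

theorem maxReRoots_continuous_general (m : ℕ) :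
    Continuous (fun M : Fin m → ℂ => maxReRoots m M) := by
  have hq : Topology.IsQuotientMap (coeffsOfRoots m) :=
    coeffsOfRoots.isProperMap.isClosedMap.isQuotientMap coeffsOfRoots.continuous
      coeffsOfRoots.surjective
  rw [hq.continuous_iff, Function.comp_def]
  simp only [coeffsOfRoots.maxReRoots_eq]
  exact continuous_sSup_range fun i => Complex.continuous_re.comp (continuous_apply i)

/-- for `m ≥ 1`, the function `Λ̄_m : ℂ^m → ℝ` is continuous on `ℂ^m`. -/
theorem maxReRoots_continuous (m : ℕ) (hm : 1 ≤ m) :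
    Continuous (fun M : Fin m → ℂ => maxReRoots m M) :=
  maxReRoots_continuous_general m
end

section
/- Let m ≥ 1 and let C_a ≥ 0, C_w ≥ 0. Then there exists a constant C̃ ≥ 0 such that for every M = (a_0, …, a_{m−1}) ∈ ℂ^m with |a_j| ≤ C_a for all j, every N = (w^0, …, w^{m−1}) ∈ ℂ^m with |w^j| ≤ C_w for all j, and every solution w of the Cauchy problem with coefficients M and initial data N, one has |w^{(i)}(ξ)| ≤ C̃ (1 + ξ^{m−1}) e^{Λ̄_m(M) ξ} for all i ∈ {0, …, m−1} and all ξ ≥ 0. -/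
open Polynomial

/-- `w` is a solution of the Cauchy problem with coefficients `M = (a_0, …, a_{m-1})`
and initial data `N = (w^0, …, w^{m-1})`: it is `m` times differentiable, satisfies
`w^{(m)}(ξ) = a_{m-1} w^{(m-1)}(ξ) + ⋯ + a_0 w(ξ)` for `ξ ≥ 0`, and `w^{(j)}(0) = w^j`. -/
def IsCauchySolution (m : ℕ) (M N : Fin m → ℂ) (w : ℝ → ℂ) : Prop :=
  (∀ i < m, Differentiable ℝ (iteratedDeriv i w)) ∧
  (∀ ξ : ℝ, 0 ≤ ξ → iteratedDeriv m w ξ = ∑ j : Fin m, M j * iteratedDeriv (j : ℕ) w ξ) ∧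
  (∀ j : Fin m, iteratedDeriv (j : ℕ) w 0 = N j)

/-!
Induction on the order. Factor `P = (X - a) Q` at a root `a` of `P`. Then `u = w' - a w`
solves the equation of `Q`, whose coefficients and initial data are bounded in terms of those
of `P` and `w` because the Cauchy bound controls `‖a‖`; by induction the derivatives of `u`
grow like `ξ^{m-2} e^{Λ ξ}`. Variation of constants for `w' = a w + u` (with `Re a ≤ Λ`) gains
one power of `ξ`, and `w^{(j+1)} = a w^{(j)} + u^{(j)}` carries the bound over to the
derivatives of `w`. The weight `∑_{k<m} ξ^k`, used in place of `1 + ξ^{m-1}`, lets the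
induction start at `m = 0`.
-/

open Finset

namespace Polynomial

lemma sum_range_coeff_X_sub_C_mul_mul {R : Type*} [CommRing R] {Q : R[X]} {n : ℕ}
    (hQ : Q.natDegree ≤ n) (a : R) (c : ℕ → R) :
    ∑ k ∈ range (n + 2), ((X - C a) * Q).coeff k * c k =
      ∑ k ∈ range (n + 1), Q.coeff k * (c (k + 1) - a * c k) := by
  have hQn : Q.coeff (n + 1) = 0 := coeff_eq_zero_of_natDegree_lt (by omega)
  simp only [sub_mul, coeff_sub, coeff_C_mul, mul_sub, sum_sub_distrib]
  rw [show n + 2 = n + 1 + 1 from rfl, sum_range_succ' _ (n + 1), sum_range_succ _ (n + 1)]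
  simp [coeff_X_mul, hQn, mul_left_comm, mul_assoc]

lemma Monic.exists_eq_X_sub_C_mul {K : Type*} [Field K] [IsAlgClosed K] {P : K[X]}
    (hP : P.Monic) {n : ℕ} (hPn : P.natDegree = n + 1) :
    ∃ a ∈ P.roots, ∃ Q : K[X], P = (X - C a) * Q ∧ Q.Monic ∧ Q.natDegree = n := by
  obtain ⟨a, ha⟩ := IsAlgClosed.exists_root P (by
    rw [degree_eq_natDegree hP.ne_zero, hPn]; exact_mod_cast n.succ_ne_zero)
  have hPQ : P = (X - C a) * (P /ₘ (X - C a)) := (mul_divByMonic_eq_iff_isRoot.2 ha).symm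
  refine ⟨a, (mem_roots hP.ne_zero).2 ha, _, hPQ,
    (monic_X_sub_C a).of_mul_monic_left (hPQ ▸ hP), ?_⟩
  rw [natDegree_divByMonic _ (monic_X_sub_C a), natDegree_X_sub_C, hPn, Nat.add_sub_cancel]

lemma Monic.norm_le_of_mem_roots {K : Type*} [NormedField K] {P : K[X]} (hP : P.Monic)
    {B : ℝ} (hB : ∀ k, ‖P.coeff k‖ ≤ B) {z : K} (hz : z ∈ P.roots) : ‖z‖ ≤ B + 1 := by
  have hB0 : 0 ≤ B := (norm_nonneg _).trans (hB 0)
  have hsup : (range P.natDegree).sup (‖P.coeff ·‖₊) ≤ ⟨B, hB0⟩ :=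
    Finset.sup_le fun k _ => hB k
  have hcauchy : (cauchyBound P : ℝ) ≤ B + 1 := by
    simp only [cauchyBound, hP.leadingCoeff, nnnorm_one, div_one, NNReal.coe_add, NNReal.coe_one]
    gcongr
    exact NNReal.coe_le_coe.2 hsup
  have hlt := (mem_roots'.1 hz).2.norm_lt_cauchyBound hP.ne_zero
  exact (NNReal.coe_lt_coe.2 hlt).le.trans hcauchy

lemma norm_coeff_le_of_eq_X_sub_C_mul {K : Type*} [NormedField K] {P Q : K[X]} {a : K}
    {B L : ℝ} (hPQ : P = (X - C a) * Q) (hB : ∀ k, ‖P.coeff k‖ ≤ B) (ha : ‖a‖ ≤ L) (k : ℕ) :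
    ‖Q.coeff k‖ ≤ B * (L + 1) ^ Q.natDegree := by
  have hB0 : 0 ≤ B := (norm_nonneg _).trans (hB 0)
  have hL0 : 0 ≤ L := (norm_nonneg _).trans ha
  -- synthetic division: the coefficients of `Q` are computed downwards from the top
  have hrec : ∀ k, Q.coeff k = P.coeff (k + 1) + a * Q.coeff (k + 1) := fun k => by
    rw [hPQ, sub_mul, coeff_sub, coeff_X_mul, coeff_C_mul]; ring
  have hdown : ∀ d k, Q.natDegree ≤ k + d → ‖Q.coeff k‖ ≤ B * (L + 1) ^ d := by
    intro d
    induction d with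
    | zero =>
      intro k hk
      rw [hrec, coeff_eq_zero_of_natDegree_lt (p := Q) (by omega), mul_zero, add_zero, pow_zero,
        mul_one]
      exact hB _
    | succ d ih =>
      intro k hk
      have hpow : B ≤ B * (L + 1) ^ d := le_mul_of_one_le_right hB0 (one_le_pow₀ (by linarith))
      calc ‖Q.coeff k‖ ≤ ‖P.coeff (k + 1)‖ + ‖a‖ * ‖Q.coeff (k + 1)‖ := by
            rw [hrec, ← norm_mul]; exact norm_add_le _ _
        _ ≤ B + L * (B * (L + 1) ^ d) := by
            gcongr
            · exact hB _
            · exact ih (k + 1) (by omega)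
        _ ≤ B * (L + 1) ^ (d + 1) := by rw [pow_succ]; nlinarith
  exact hdown _ k (Nat.le_add_left _ _)

end Polynomial

lemma iteratedDeriv_deriv_sub_mul {w : ℝ → ℂ} {m : ℕ}
    (hw : ∀ i < m, Differentiable ℝ (iteratedDeriv i w)) (a : ℂ) {j : ℕ} (hj : j < m) :
    iteratedDeriv j (fun t => deriv w t - a * w t) =
      fun t => iteratedDeriv (j + 1) w t - a * iteratedDeriv j w t := by
  induction j with
  | zero => simp [iteratedDeriv_one]
  | succ j ih =>
    rw [iteratedDeriv_succ, ih (by omega)]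
    funext t
    have hj1 := hw (j + 1) hj t
    have hj0 := hw j (by omega) t
    rw [deriv_fun_sub hj1 (hj0.const_mul a), deriv_const_mul a hj0, ← iteratedDeriv_succ,
      ← iteratedDeriv_succ]

lemma norm_le_of_hasDerivAt_mul_add {a : ℂ} {Λ B ξ : ℝ} {v u : ℝ → ℂ} (ha : a.re ≤ Λ)
    (hξ : 0 ≤ ξ) (hv : ∀ s ∈ Set.Icc 0 ξ, HasDerivAt v (a * v s + u s) s)
    (hu : ∀ s ∈ Set.Icc 0 ξ, ‖u s‖ ≤ B * Real.exp (Λ * s)) :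
    ‖v ξ‖ ≤ (‖v 0‖ + B * ξ) * Real.exp (Λ * ξ) := by
  have hB : 0 ≤ B := by simpa using (norm_nonneg _).trans (hu 0 ⟨le_rfl, hξ⟩)
  -- variation of constants
  set g : ℝ → ℂ := fun s => Complex.exp (-a * s) * v s
  have hg : ∀ s ∈ Set.Icc 0 ξ,
      HasDerivWithinAt g (Complex.exp (-a * s) * u s) (Set.Icc 0 ξ) s := by
    intro s hs
    have hexp :
        HasDerivAt (fun s : ℝ => Complex.exp (-a * s)) (-a * Complex.exp (-a * s)) s := by
      simpa [mul_comm] using ((hasDerivAt_id (s : ℂ)).const_mul (-a)).cexp.comp_ofReal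
    exact ((hexp.fun_mul (hv s hs)).congr_deriv (by ring)).hasDerivWithinAt
  have hg' : ∀ s ∈ Set.Ico 0 ξ,
      ‖Complex.exp (-a * s) * u s‖ ≤ B * Real.exp ((Λ - a.re) * ξ) := by
    intro s hs
    rw [norm_mul, Complex.norm_exp]
    calc Real.exp (-a * s).re * ‖u s‖ ≤ Real.exp (-(a.re * s)) * (B * Real.exp (Λ * s)) := by
          gcongr
          · simp
          · exact hu s (Set.Ico_subset_Icc_self hs)
      _ = B * Real.exp ((Λ - a.re) * s) := by rw [mul_left_comm, ← Real.exp_add]; congr 2; ring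
      _ ≤ B * Real.exp ((Λ - a.re) * ξ) := by gcongr; exact hs.2.le
  have hgξ := norm_image_sub_le_of_norm_deriv_le_segment' hg hg' ξ ⟨hξ, le_rfl⟩
  have hvξ : v ξ = Complex.exp (a * ξ) * g ξ := by
    simp [g, ← mul_assoc, ← Complex.exp_add]
  have hg0 : g 0 = v 0 := by simp [g]
  calc ‖v ξ‖ = Real.exp (a.re * ξ) * ‖g ξ‖ := by rw [hvξ, norm_mul, Complex.norm_exp]; simp
    _ ≤ Real.exp (a.re * ξ) * (‖v 0‖ + B * Real.exp ((Λ - a.re) * ξ) * ξ) := by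
        gcongr
        rw [sub_zero, hg0] at hgξ
        linarith [norm_le_norm_add_norm_sub' (g ξ) (v 0)]
    _ = Real.exp (a.re * ξ) * ‖v 0‖ + B * ξ * Real.exp (Λ * ξ) := by
        have hexp : Real.exp (a.re * ξ) * Real.exp ((Λ - a.re) * ξ) = Real.exp (Λ * ξ) := by
          rw [← Real.exp_add]; ring_nf
        linear_combination (B * ξ) * hexp
    _ ≤ (‖v 0‖ + B * ξ) * Real.exp (Λ * ξ) := by
        have : Real.exp (a.re * ξ) ≤ Real.exp (Λ * ξ) := by gcongr
        nlinarith [norm_nonneg (v 0)]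

lemma le_mul_add_one_pow_of_le_mul_add {x : ℕ → ℝ} {D L : ℝ} {n : ℕ} (hD : 0 ≤ D)
    (hL : 0 ≤ L) (h0 : x 0 ≤ D) (hsucc : ∀ j < n, x (j + 1) ≤ L * x j + D) :
    ∀ j ≤ n, x j ≤ D * (L + 1) ^ j := by
  intro j hj
  induction j with
  | zero => simpa using h0
  | succ j ih =>
    have hpow : D ≤ D * (L + 1) ^ j := le_mul_of_one_le_right hD (one_le_pow₀ (by linarith))
    calc x (j + 1) ≤ L * x j + D := hsucc j hj
      _ ≤ L * (D * (L + 1) ^ j) + D * (L + 1) ^ j :=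
          add_le_add (mul_le_mul_of_nonneg_left (ih (by omega)) hL) hpow
      _ = D * (L + 1) ^ (j + 1) := by ring

lemma geom_sum_le_mul_one_add_pow {x : ℝ} (hx : 0 ≤ x) (m : ℕ) :
    ∑ k ∈ range m, x ^ k ≤ m * (1 + x ^ (m - 1)) := by
  calc ∑ k ∈ range m, x ^ k ≤ ∑ _k ∈ range m, (1 + x ^ (m - 1)) := by
        refine sum_le_sum fun k hk => ?_
        rcases le_or_gt x 1 with h | h
        · linarith [pow_le_one₀ hx h (n := k), pow_nonneg hx (m - 1)]
        · linarith [pow_le_pow_right₀ h.le (Nat.le_sub_one_of_lt (mem_range.1 hk))]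
    _ = m * (1 + x ^ (m - 1)) := by rw [sum_const, card_range, nsmul_eq_mul]

/-- `w` solves `P(d/dξ) w = 0` on `[0, ∞)`. -/
def IsLinearODESolution (P : ℂ[X]) (w : ℝ → ℂ) : Prop :=
  (∀ i < P.natDegree, Differentiable ℝ (iteratedDeriv i w)) ∧
    ∀ ξ : ℝ, 0 ≤ ξ → ∑ k ∈ range (P.natDegree + 1), P.coeff k * iteratedDeriv k w ξ = 0

lemma IsLinearODESolution.deriv_sub_mul {P Q : ℂ[X]} {a : ℂ} {w : ℝ → ℂ}
    (hw : IsLinearODESolution P w) (hPQ : P = (X - C a) * Q) (hQ : Q ≠ 0) :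
    IsLinearODESolution Q (fun t => deriv w t - a * w t) := by
  have hdeg : P.natDegree = Q.natDegree + 1 := by
    rw [hPQ, natDegree_mul (X_sub_C_ne_zero a) hQ, natDegree_X_sub_C, add_comm]
  have hshift (j : ℕ) (hj : j < Q.natDegree + 1) :=
    iteratedDeriv_deriv_sub_mul hw.1 a (hdeg ▸ hj)
  refine ⟨fun i hi => ?_, fun ξ hξ => ?_⟩
  · rw [hshift i (by omega)]
    exact (hw.1 (i + 1) (by omega)).sub ((hw.1 i (by omega)).const_mul a)
  · rw [sum_congr rfl fun k hk => by rw [hshift k (mem_range.1 hk)]]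
    beta_reduce
    rw [← sum_range_coeff_X_sub_C_mul_mul le_rfl a (iteratedDeriv · w ξ), ← hPQ]
    simpa only [hdeg] using hw.2 ξ hξ

lemma norm_le_of_bound_deriv_sub_mul {w : ℝ → ℂ} {a : ℂ} {n : ℕ} {Λ K Cw ξ : ℝ}
    (hw : Differentiable ℝ w) (ha : a.re ≤ Λ) (hK : 0 ≤ K) (hw0 : ‖w 0‖ ≤ Cw) (hξ : 0 ≤ ξ)
    (hu : ∀ s : ℝ, 0 ≤ s → ‖deriv w s - a * w s‖ ≤
      K * (∑ k ∈ range n, s ^ k) * Real.exp (Λ * s)) :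
    ‖w ξ‖ ≤ (Cw + K) * ((∑ k ∈ range (n + 1), ξ ^ k) * Real.exp (Λ * ξ)) := by
  have hCw : 0 ≤ Cw := (norm_nonneg _).trans hw0
  have hS : 0 ≤ ∑ k ∈ range n, ξ ^ k := by positivity
  have hv (s : ℝ) (_ : s ∈ Set.Icc 0 ξ) :
      HasDerivAt w (a * w s + (deriv w s - a * w s)) s := by
    simpa using (hw s).hasDerivAt
  have hu_le (s : ℝ) (hs : s ∈ Set.Icc 0 ξ) :
      ‖deriv w s - a * w s‖ ≤ K * (∑ k ∈ range n, ξ ^ k) * Real.exp (Λ * s) := by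
    refine (hu s hs.1).trans ?_
    gcongr with k; exacts [hs.1, hs.2]
  calc ‖w ξ‖ ≤ (‖w 0‖ + K * (∑ k ∈ range n, ξ ^ k) * ξ) * Real.exp (Λ * ξ) :=
        norm_le_of_hasDerivAt_mul_add ha hξ hv hu_le
    _ ≤ (Cw + K) * ((∑ k ∈ range (n + 1), ξ ^ k) * Real.exp (Λ * ξ)) := by
        rw [geom_sum_succ, ← mul_assoc]
        gcongr
        nlinarith [mul_nonneg hCw (mul_nonneg hξ hS), mul_nonneg hK hS]

lemma norm_iteratedDeriv_le_of_bound_deriv_sub_mul {w : ℝ → ℂ} {a : ℂ} {n : ℕ}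
    {Λ L K Cw : ℝ}
    (hw : ∀ i < n + 1, Differentiable ℝ (iteratedDeriv i w)) (ha : a.re ≤ Λ) (haL : ‖a‖ ≤ L)
    (hK : 0 ≤ K) (hw0 : ‖w 0‖ ≤ Cw)
    (hu : ∀ j ≤ n, ∀ s : ℝ, 0 ≤ s → ‖iteratedDeriv j (fun t => deriv w t - a * w t) s‖ ≤
      K * (∑ k ∈ range n, s ^ k) * Real.exp (Λ * s)) :
    ∀ i ≤ n + 1, ∀ ξ : ℝ, 0 ≤ ξ → ‖iteratedDeriv i w ξ‖ ≤
      (Cw + K) * (L + 1) ^ (n + 1) * (∑ k ∈ range (n + 1), ξ ^ k) * Real.exp (Λ * ξ) := by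
  intro i hi ξ hξ
  set E := (∑ k ∈ range (n + 1), ξ ^ k) * Real.exp (Λ * ξ) with hE
  have hCw : 0 ≤ Cw := (norm_nonneg _).trans hw0
  have hL : 0 ≤ L := (norm_nonneg a).trans haL
  have hw_le : ‖w ξ‖ ≤ (Cw + K) * E :=
    norm_le_of_bound_deriv_sub_mul (by simpa using hw 0 n.succ_pos) ha hK hw0 hξ
      (by simpa using hu 0 n.zero_le)
  have hderiv_le (j : ℕ) (hj : j < n + 1) :
      ‖iteratedDeriv (j + 1) w ξ‖ ≤ L * ‖iteratedDeriv j w ξ‖ + (Cw + K) * E := by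
    have hsucc := congrFun (iteratedDeriv_deriv_sub_mul hw a hj) ξ
    calc ‖iteratedDeriv (j + 1) w ξ‖
          ≤ ‖a‖ * ‖iteratedDeriv j w ξ‖ +
              ‖iteratedDeriv (j + 1) w ξ - a * iteratedDeriv j w ξ‖ := by
            rw [← norm_mul]; exact norm_le_norm_add_norm_sub' _ _
      _ ≤ L * ‖iteratedDeriv j w ξ‖ + K * (∑ k ∈ range n, ξ ^ k) * Real.exp (Λ * ξ) := by
          gcongr; exact hsucc ▸ hu j (by omega) ξ hξ
      _ ≤ L * ‖iteratedDeriv j w ξ‖ + (Cw + K) * E := by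
          rw [hE, geom_sum_succ', ← mul_assoc]
          gcongr <;> linarith [pow_nonneg hξ n]
  calc ‖iteratedDeriv i w ξ‖ ≤ (Cw + K) * E * (L + 1) ^ i :=
        le_mul_add_one_pow_of_le_mul_add (x := fun j => ‖iteratedDeriv j w ξ‖) (by positivity)
          hL (by simpa using hw_le) hderiv_le i hi
    _ ≤ (Cw + K) * E * (L + 1) ^ (n + 1) := by gcongr; linarith
    _ = _ := by ring

theorem exists_uniform_bound_of_isLinearODESolution (m : ℕ) (B Cw : ℝ) (hB : 0 ≤ B)
    (hCw : 0 ≤ Cw) :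
    ∃ C : ℝ, 0 ≤ C ∧ ∀ P : ℂ[X], P.Monic → P.natDegree = m → (∀ k, ‖P.coeff k‖ ≤ B) →
      ∀ w : ℝ → ℂ, IsLinearODESolution P w → (∀ j < m, ‖iteratedDeriv j w 0‖ ≤ Cw) →
        ∀ Λ : ℝ, (∀ z ∈ P.roots, z.re ≤ Λ) → ∀ i ≤ m, ∀ ξ : ℝ, 0 ≤ ξ →
          ‖iteratedDeriv i w ξ‖ ≤ C * (∑ k ∈ range m, ξ ^ k) * Real.exp (Λ * ξ) := by
  induction m generalizing B Cw with
  | zero =>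
    refine ⟨0, le_rfl, fun P hP hP0 _ w hw _ Λ _ i hi ξ hξ => ?_⟩
    have hwξ : w ξ = 0 := by simpa [eq_one_of_monic_natDegree_zero hP hP0] using hw.2 ξ hξ
    simp [Nat.le_zero.1 hi, hwξ]
  | succ n ih =>
    set L := B + 1
    obtain ⟨K, hK, hK_bound⟩ :=
      ih (B * (L + 1) ^ n) ((1 + L) * Cw) (by positivity) (by positivity)
    refine ⟨(Cw + K) * (L + 1) ^ (n + 1), by positivity,
      fun P hP hPn hPB w hw hw0 Λ hΛ => ?_⟩
    obtain ⟨a, ha, Q, hPQ, hQ, hQn⟩ := hP.exists_eq_X_sub_C_mul hPn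
    have haL : ‖a‖ ≤ L := hP.norm_le_of_mem_roots hPB ha
    have hwd : ∀ i < n + 1, Differentiable ℝ (iteratedDeriv i w) := hPn ▸ hw.1
    have hu0 (j : ℕ) (hj : j < n) :
        ‖iteratedDeriv j (fun t => deriv w t - a * w t) 0‖ ≤ (1 + L) * Cw := by
      rw [iteratedDeriv_deriv_sub_mul hwd a (by omega)]
      calc _ ≤ ‖iteratedDeriv (j + 1) w 0‖ + ‖a‖ * ‖iteratedDeriv j w 0‖ := by
            rw [← norm_mul]; exact norm_sub_le _ _
        _ ≤ Cw + L * Cw := by gcongr <;> apply hw0 <;> omega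
        _ = (1 + L) * Cw := by ring
    have hQΛ (z : ℂ) (hz : z ∈ Q.roots) : z.re ≤ Λ :=
      hΛ z (Multiset.subset_of_le (roots.le_of_dvd hP.ne_zero ⟨_, hPQ.trans (mul_comm _ _)⟩) hz)
    have hQB (k : ℕ) : ‖Q.coeff k‖ ≤ B * (L + 1) ^ n :=
      hQn ▸ norm_coeff_le_of_eq_X_sub_C_mul hPQ hPB haL k
    exact norm_iteratedDeriv_le_of_bound_deriv_sub_mul hwd (hΛ a ha) haL hK
      (by simpa using hw0 0 n.succ_pos)
      (hK_bound Q hQ hQn hQB _ (hw.deriv_sub_mul hPQ hQ.ne_zero) hu0 Λ hQΛ)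

lemma charPoly_monic (m : ℕ) (M : Fin m → ℂ) : (charPoly m M).Monic :=
  monic_X_pow_sub (degree_sum_fin_lt M)

lemma charPoly_natDegree (m : ℕ) (M : Fin m → ℂ) : (charPoly m M).natDegree = m := by
  have hlt : (∑ j : Fin m, C (M j) * X ^ (j : ℕ)).degree < (X ^ m : ℂ[X]).degree :=
    (degree_X_pow (R := ℂ) m).symm ▸ degree_sum_fin_lt M
  exact natDegree_eq_of_degree_eq_some
    ((degree_sub_eq_left_of_degree_lt hlt).trans (degree_X_pow m))

lemma charPoly_coeff_self (m : ℕ) (M : Fin m → ℂ) : (charPoly m M).coeff m = 1 := by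
  simpa only [charPoly_natDegree] using (charPoly_monic m M).coeff_natDegree

lemma charPoly_coeff_of_lt {m k : ℕ} (M : Fin m → ℂ) (hk : k < m) :
    (charPoly m M).coeff k = -M ⟨k, hk⟩ := by
  simp only [charPoly, coeff_sub, coeff_X_pow, hk.ne, if_false, finsetSum_coeff,
    coeff_C_mul_X_pow, zero_sub]
  rw [Fintype.sum_eq_single ⟨k, hk⟩ fun x hx => if_neg fun h => hx (Fin.ext h.symm), if_pos rfl]

lemma norm_coeff_charPoly_le {m : ℕ} {M : Fin m → ℂ} {Ca : ℝ} (hM : ∀ j, ‖M j‖ ≤ Ca) (k : ℕ) :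
    ‖(charPoly m M).coeff k‖ ≤ max Ca 1 := by
  rcases lt_trichotomy k m with hk | hk | hk
  · rw [charPoly_coeff_of_lt M hk, norm_neg]
    exact (hM _).trans (le_max_left _ _)
  · rw [hk, charPoly_coeff_self, norm_one]
    exact le_max_right _ _
  · rw [coeff_eq_zero_of_natDegree_lt (by rwa [charPoly_natDegree]), norm_zero]
    exact zero_le_one.trans (le_max_right _ _)

lemma sum_range_charPoly_coeff_mul (m : ℕ) (M : Fin m → ℂ) (c : ℕ → ℂ) :
    ∑ k ∈ range (m + 1), (charPoly m M).coeff k * c k = c m - ∑ j : Fin m, M j * c j := by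
  rw [sum_range_succ, charPoly_coeff_self, sum_range, one_mul, sub_eq_neg_add,
    ← sum_neg_distrib]
  congr 1
  exact sum_congr rfl fun j _ => by rw [charPoly_coeff_of_lt M j.isLt, neg_mul]

lemma IsCauchySolution.isLinearODESolution {m : ℕ} {M N : Fin m → ℂ} {w : ℝ → ℂ}
    (hw : IsCauchySolution m M N w) : IsLinearODESolution (charPoly m M) w := by
  rw [IsLinearODESolution, charPoly_natDegree]
  exact ⟨hw.1, fun ξ hξ => by rw [sum_range_charPoly_coeff_mul, hw.2.1 ξ hξ, sub_self]⟩

lemma re_le_maxReRoots {m : ℕ} {M : Fin m → ℂ} {z : ℂ} (hz : z ∈ (charPoly m M).roots) :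
    z.re ≤ maxReRoots m M :=
  le_csSup (((charPoly m M).roots.finite_toSet.image _).bddAbove) ⟨z, hz, rfl⟩

theorem uniform_exp_power_estimate_general (m : ℕ) (Ca Cw : ℝ)
    (hCw : 0 ≤ Cw) :
    ∃ Ct : ℝ, 0 ≤ Ct ∧
      ∀ (M N : Fin m → ℂ), (∀ j, ‖M j‖ ≤ Ca) → (∀ j, ‖N j‖ ≤ Cw) →
        ∀ w : ℝ → ℂ, IsCauchySolution m M N w →
          ∀ i < m, ∀ ξ : ℝ, 0 ≤ ξ →
            ‖iteratedDeriv i w ξ‖ ≤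
              Ct * (1 + ξ ^ (m - 1)) * Real.exp (maxReRoots m M * ξ) := by
  obtain ⟨C, hC, hbound⟩ :=
    exists_uniform_bound_of_isLinearODESolution m (max Ca 1) Cw (by positivity) hCw
  refine ⟨C * m, by positivity, fun M N hM hN w hw i hi ξ hξ => ?_⟩
  have hw0 (j : ℕ) (hj : j < m) : ‖iteratedDeriv j w 0‖ ≤ Cw := hw.2.2 ⟨j, hj⟩ ▸ hN _
  calc ‖iteratedDeriv i w ξ‖
        ≤ C * (∑ k ∈ range m, ξ ^ k) * Real.exp (maxReRoots m M * ξ) :=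
        hbound _ (charPoly_monic m M) (charPoly_natDegree m M) (norm_coeff_charPoly_le hM) w
          hw.isLinearODESolution hw0 _ (fun _ => re_le_maxReRoots) i hi.le ξ hξ
    _ ≤ C * (m * (1 + ξ ^ (m - 1))) * Real.exp (maxReRoots m M * ξ) := by
        gcongr; exact geom_sum_le_mul_one_add_pow hξ m
    _ = C * m * (1 + ξ ^ (m - 1)) * Real.exp (maxReRoots m M * ξ) := by ring

/-- uniform exponential-power estimate
`|w^{(i)}(ξ)| ≤ C̃ (1 + ξ^{m-1}) e^{Λ̄_m(M) ξ}` for the solution of the Cauchy problem,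
uniformly over coefficients and initial data in bounded boxes. -/
theorem uniform_exp_power_estimate (m : ℕ) (hm : 1 ≤ m) (Ca Cw : ℝ)
    (hCa : 0 ≤ Ca) (hCw : 0 ≤ Cw) :
    ∃ Ct : ℝ, 0 ≤ Ct ∧
      ∀ (M N : Fin m → ℂ), (∀ j, ‖M j‖ ≤ Ca) → (∀ j, ‖N j‖ ≤ Cw) →
        ∀ w : ℝ → ℂ, IsCauchySolution m M N w →
          ∀ i < m, ∀ ξ : ℝ, 0 ≤ ξ →
            ‖iteratedDeriv i w ξ‖ ≤
              Ct * (1 + ξ ^ (m - 1)) * Real.exp (maxReRoots m M * ξ) :=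
  uniform_exp_power_estimate_general m Ca Cw hCw
end

section
/- Let m ≥ 1 and let C_a ≥ 0, C_w ≥ 0. Then for every natural number i there exists a constant C̃_i ≥ 0 such that for every M = (a_0, …, a_{m−1}) ∈ ℂ^m with |a_j| ≤ C_a for all j, every N = (w^0, …, w^{m−1}) ∈ ℂ^m with |w^j| ≤ C_w for all j, and every infinitely differentiable solution w of the Cauchy problem with coefficients M and initial data N, one has |w^{(i)}(ξ)| ≤ C̃_i (1 + ξ^{m−1}) e^{Λ̄_m(M) ξ} for all ξ ≥ 0 (so the exponential-power estimate holds for derivatives of arbitrary order, not only of order less than m). -/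
open Polynomial

namespace UEP

open Finset

/-- smoothness hypothesis we carry around -/
def AllDiff (w : ℝ → ℂ) : Prop := ∀ n : ℕ, Differentiable ℝ (iteratedDeriv n w)

lemma AllDiff.of_contDiff {w : ℝ → ℂ} (hw : ContDiff ℝ (⊤ : ℕ∞) w) : AllDiff w :=
  fun n => hw.differentiable_iteratedDeriv n (by exact_mod_cast ENat.coe_lt_top n)

lemma AllDiff.cont {w : ℝ → ℂ} (hd : AllDiff w) (n : ℕ) : Continuous (iteratedDeriv n w) :=
  (hd n).continuous

lemma iter_iter (w : ℝ → ℂ) (i : ℕ) : ∀ n : ℕ,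
    iteratedDeriv n (iteratedDeriv i w) = iteratedDeriv (n + i) w := by
  intro n
  induction n with
  | zero => simp [iteratedDeriv_zero]
  | succ n ih =>
    rw [iteratedDeriv_succ, ih, ← iteratedDeriv_succ, Nat.add_right_comm]

lemma AllDiff.iter {w : ℝ → ℂ} (hd : AllDiff w) (i : ℕ) : AllDiff (iteratedDeriv i w) := by
  intro n
  rw [iter_iter]
  exact hd (n + i)

/-! ### The operator `p(D)` -/

/-- Apply the differential operator `p(D)` to `w`, using coefficients up to index `n`. -/
noncomputable def polyApply (n : ℕ) (p : Polynomial ℂ) (w : ℝ → ℂ) : ℝ → ℂ :=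
  fun ξ => ∑ j ∈ range (n + 1), p.coeff j * iteratedDeriv j w ξ

lemma polyApply_continuous {w : ℝ → ℂ} (hw : AllDiff w) (n : ℕ) (p : Polynomial ℂ) :
    Continuous (polyApply n p w) := by
  apply continuous_finset_sum
  exact fun j _ => continuous_const.mul (hw.cont j)

lemma polyApply_congr {p : Polynomial ℂ} {n n' : ℕ} (hn : p.natDegree ≤ n) (hn' : p.natDegree ≤ n')
    (w : ℝ → ℂ) : polyApply n p w = polyApply n' p w := by
  have key : ∀ k : ℕ, p.natDegree ≤ k →
      polyApply k p w = fun ξ => ∑ j ∈ range (p.natDegree + 1), p.coeff j * iteratedDeriv j w ξ := by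
    intro k hk
    funext ξ
    exact (Finset.sum_subset (by simpa [Finset.range_subset_range] using Nat.succ_le_succ hk)
      (fun x _ hx => by
        rw [p.coeff_eq_zero_of_natDegree_lt (by simpa using hx), zero_mul])).symm
  rw [key n hn, key n' hn']

lemma polyApply_hasDerivAt {w : ℝ → ℂ} (hw : AllDiff w) (n : ℕ) (p : Polynomial ℂ)
    (ξ : ℝ) :
    HasDerivAt (polyApply n p w) (polyApply (n + 1) (X * p) w ξ) ξ := by
  have h : HasDerivAt (polyApply n p w)
      (∑ j ∈ range (n + 1), p.coeff j * iteratedDeriv (j + 1) w ξ) ξ := by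
    apply HasDerivAt.fun_sum
    intro j _
    have := ((hw j).differentiableAt (x := ξ)).hasDerivAt
    rw [iteratedDeriv_succ]
    exact this.const_mul _
  convert h using 1
  unfold polyApply
  rw [Finset.sum_range_succ']
  simp [coeff_X_mul]

lemma polyApply_C_mul {w : ℝ → ℂ} (n : ℕ) (a : ℂ) (p : Polynomial ℂ) :
    polyApply n (C a * p) w = fun ξ => a * polyApply n p w ξ := by
  funext ξ
  unfold polyApply
  rw [Finset.mul_sum]
  exact Finset.sum_congr rfl fun j _ => by rw [coeff_C_mul]; ring

lemma polyApply_sub {w : ℝ → ℂ} (n : ℕ) (p q : Polynomial ℂ) :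
    polyApply n (p - q) w = fun ξ => polyApply n p w ξ - polyApply n q w ξ := by
  funext ξ
  unfold polyApply
  rw [← Finset.sum_sub_distrib]
  exact Finset.sum_congr rfl fun j _ => by rw [coeff_sub]; ring

/-- The key derivative relation. -/
lemma polyApply_step {w : ℝ → ℂ} (hw : AllDiff w) {n : ℕ} {p : Polynomial ℂ}
    (hp : p.natDegree ≤ n) (a : ℂ) (ξ : ℝ) :
    HasDerivAt (polyApply n p w)
      (polyApply (n + 1) ((X - C a) * p) w ξ + a * polyApply n p w ξ) ξ := by
  have h := polyApply_hasDerivAt hw n p ξ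
  convert h using 1
  rw [sub_mul, polyApply_sub, polyApply_C_mul]
  have : polyApply (n+1) p w = polyApply n p w := polyApply_congr (le_trans hp (by omega)) hp w
  rw [this]
  ring

/-! ### The Grönwall step -/

lemma norm_cexp (z : ℂ) : ‖Complex.exp z‖ = Real.exp z.re := Complex.norm_exp z

lemma gronwall_step (a : ℂ) (Λ : ℝ) (ha : a.re ≤ Λ) (u f : ℝ → ℂ)
    (hu : ∀ ξ : ℝ, HasDerivAt u (f ξ + a * u ξ) ξ)
    (hf : Continuous f) (A : ℝ) (hA : 0 ≤ A) (k : ℕ)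
    (hb : ∀ ξ : ℝ, 0 ≤ ξ → ‖f ξ‖ ≤ A * (1 + ξ) ^ k * Real.exp (Λ * ξ)) :
    ∀ ξ : ℝ, 0 ≤ ξ → ‖u ξ‖ ≤ (‖u 0‖ + A * ξ * (1 + ξ) ^ k) * Real.exp (Λ * ξ) := by
  intro ξ hξ
  have hexp : ∀ s : ℝ, HasDerivAt (fun s : ℝ => Complex.exp (-a * s))
      (-a * Complex.exp (-a * s)) s := by
    intro s
    have h1 : HasDerivAt (fun s : ℝ => ((s : ℂ))) 1 s := by
      exact Complex.ofRealCLM.hasDerivAt (x := s)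
    have h2 : HasDerivAt (fun s : ℝ => -a * (s : ℂ)) (-a) s := by
      simpa using h1.const_mul (-a)
    simpa [mul_comm] using h2.cexp
  set g : ℝ → ℂ := fun s => Complex.exp (-a * s) * u s with hgdef
  have hg : ∀ s : ℝ, HasDerivAt g (Complex.exp (-a * s) * f s) s := by
    intro s
    have : HasDerivAt g (-a * Complex.exp (-a * s) * u s
        + Complex.exp (-a * s) * (f s + a * u s)) s := (hexp s).mul (hu s)
    convert this using 1
    ring
  have hint : IntervalIntegrable (fun s : ℝ => Complex.exp (-a * s) * f s)
      MeasureTheory.volume 0 ξ := by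
    apply Continuous.intervalIntegrable
    exact (Complex.continuous_exp.comp (by continuity)).mul hf
  have hftc := intervalIntegral.integral_eq_sub_of_hasDerivAt (fun x _ => hg x) hint
  have hg0 : g 0 = u 0 := by simp [hgdef]
  have hone : Complex.exp (a * ξ) * Complex.exp (-a * ξ) = 1 := by
    rw [← Complex.exp_add, show a * (ξ:ℂ) + -a * ξ = 0 by ring, Complex.exp_zero]
  have hrepr : u ξ = Complex.exp (a * ξ) *
      (u 0 + ∫ s in (0:ℝ)..ξ, Complex.exp (-a * s) * f s) := by
    rw [hftc, hg0, hgdef]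
    simp only
    calc u ξ = (Complex.exp (a * ξ) * Complex.exp (-a * ξ)) * u ξ := by rw [hone]; ring
    _ = _ := by ring
  have hre : ∀ s : ℝ, (-a * (s:ℂ)).re = -(a.re * s) := by
    intro s; simp [Complex.mul_re]
  have hibound : ‖∫ s in (0:ℝ)..ξ, Complex.exp (-a * s) * f s‖ ≤
      A * (1 + ξ) ^ k * Real.exp ((Λ - a.re) * ξ) * |ξ - 0| := by
    apply intervalIntegral.norm_integral_le_of_norm_le_const
    intro x hx
    rw [Set.uIoc_of_le hξ] at hx
    obtain ⟨hx0, hxξ⟩ := hx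
    have hx0' : (0:ℝ) ≤ x := le_of_lt hx0
    rw [norm_mul, norm_cexp, hre]
    calc Real.exp (-(a.re * x)) * ‖f x‖
        ≤ Real.exp (-(a.re * x)) * (A * (1 + x) ^ k * Real.exp (Λ * x)) := by
          exact mul_le_mul_of_nonneg_left (hb x hx0') (Real.exp_nonneg _)
      _ = A * (1 + x) ^ k * Real.exp ((Λ - a.re) * x) := by
          rw [show Real.exp (-(a.re * x)) * (A * (1 + x) ^ k * Real.exp (Λ * x))
            = A * (1 + x) ^ k * (Real.exp (-(a.re * x)) * Real.exp (Λ * x)) from by ring,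
            ← Real.exp_add, show -(a.re * x) + Λ * x = (Λ - a.re) * x from by ring]
      _ ≤ A * (1 + ξ) ^ k * Real.exp ((Λ - a.re) * ξ) := by
          have h1 : (1 + x) ^ k ≤ (1 + ξ) ^ k :=
            pow_le_pow_left₀ (by linarith) (by linarith) k
          have h2 : Real.exp ((Λ - a.re) * x) ≤ Real.exp ((Λ - a.re) * ξ) := by
            apply Real.exp_le_exp.mpr
            have : 0 ≤ Λ - a.re := by linarith
            nlinarith
          exact mul_le_mul (mul_le_mul_of_nonneg_left h1 hA) h2
            (Real.exp_nonneg _) (by positivity)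
  rw [hrepr, norm_mul, norm_cexp]
  have hare : (a * (ξ:ℂ)).re = a.re * ξ := by simp [Complex.mul_re]
  rw [hare]
  have habs : |ξ - 0| = ξ := by rw [sub_zero, abs_of_nonneg hξ]
  rw [habs] at hibound
  have hn : ‖u 0 + ∫ s in (0:ℝ)..ξ, Complex.exp (-a * s) * f s‖ ≤
      ‖u 0‖ + A * (1 + ξ) ^ k * Real.exp ((Λ - a.re) * ξ) * ξ :=
    le_trans (norm_add_le _ _) (by linarith)
  calc Real.exp (a.re * ξ) * ‖u 0 + ∫ s in (0:ℝ)..ξ, Complex.exp (-a * s) * f s‖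
      ≤ Real.exp (a.re * ξ) * (‖u 0‖ + A * (1 + ξ) ^ k * Real.exp ((Λ - a.re) * ξ) * ξ) :=
        mul_le_mul_of_nonneg_left hn (Real.exp_nonneg _)
    _ = Real.exp (a.re * ξ) * ‖u 0‖ + A * ξ * (1 + ξ) ^ k * Real.exp (Λ * ξ) := by
        have hmul : Real.exp (a.re * ξ) * Real.exp ((Λ - a.re) * ξ) = Real.exp (Λ * ξ) := by
          rw [← Real.exp_add, show a.re * ξ + (Λ - a.re) * ξ = Λ * ξ from by ring]
        linear_combination (A * (1 + ξ) ^ k * ξ) * hmul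
    _ ≤ (‖u 0‖ + A * ξ * (1 + ξ) ^ k) * Real.exp (Λ * ξ) := by
        have h1 : Real.exp (a.re * ξ) ≤ Real.exp (Λ * ξ) := by
          apply Real.exp_le_exp.mpr; nlinarith
        nlinarith [norm_nonneg (u 0), Real.exp_nonneg (Λ * ξ),
          mul_nonneg (mul_nonneg (mul_nonneg hA hξ)
            (pow_nonneg (by linarith : (0:ℝ) ≤ 1 + ξ) k)) (Real.exp_nonneg (Λ * ξ))]

/-! ### Products over lists of roots -/

noncomputable def lprod (l : List ℂ) : Polynomial ℂ := (l.map fun a => X - C a).prod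

@[simp] lemma lprod_nil : lprod [] = 1 := rfl

lemma lprod_cons (a : ℂ) (l : List ℂ) : lprod (a :: l) = (X - C a) * lprod l := by
  simp [lprod]

lemma lprod_natDegree_le (l : List ℂ) : (lprod l).natDegree ≤ l.length := by
  induction l with
  | nil => simp
  | cons a l ih =>
    rw [lprod_cons]
    calc ((X - C a) * lprod l).natDegree ≤ (X - C a).natDegree + (lprod l).natDegree :=
      natDegree_mul_le
    _ ≤ 1 + l.length := by
        have : (X - C a).natDegree = 1 := natDegree_X_sub_C a
        omega
    _ = (a :: l).length := by simp [add_comm]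

lemma lprod_coeff_bound (R : ℝ) (hR : 0 ≤ R) :
    ∀ (l : List ℂ), (∀ a ∈ l, ‖a‖ ≤ R) → ∀ j, ‖(lprod l).coeff j‖ ≤ (1 + R) ^ l.length := by
  intro l
  induction l with
  | nil =>
    intro _ j
    rcases j with _ | j <;> simp [lprod, coeff_one]
  | cons a l ih =>
    intro hl j
    have ha : ‖a‖ ≤ R := hl a (by simp)
    have ihl := ih (fun b hb => hl b (by simp [hb]))
    rw [lprod_cons, sub_mul, coeff_sub, coeff_C_mul]
    have hX : ∀ j : ℕ, ‖(X * lprod l).coeff j‖ ≤ (1 + R) ^ l.length := by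
      intro j
      rcases j with _ | j
      · rw [mul_coeff_zero, coeff_X_zero, zero_mul, norm_zero]; positivity
      · rw [coeff_X_mul]; exact ihl j
    have h1 := hX j
    have h2 : ‖a‖ * ‖(lprod l).coeff j‖ ≤ R * (1 + R) ^ l.length :=
      mul_le_mul ha (ihl j) (norm_nonneg _) hR
    have h3 : ‖(X * lprod l).coeff j - a * (lprod l).coeff j‖
        ≤ ‖(X * lprod l).coeff j‖ + ‖a‖ * ‖(lprod l).coeff j‖ := by
      rw [← norm_mul]; exact norm_sub_le _ _
    have h4 : (1 + R) ^ (a :: l).length = (1 + R) ^ l.length + R * (1 + R) ^ l.length := by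
      simp only [List.length_cons, pow_succ]; ring
    rw [h4]
    linarith

/-- The Grönwall chain over a list of roots. -/
lemma chain {w : ℝ → ℂ} (hw : AllDiff w) (Λ K : ℝ) (hK : 0 ≤ K) :
    ∀ (l : List ℂ), (∀ a ∈ l, a.re ≤ Λ) →
    (∀ i : ℕ, ‖polyApply (l.drop (i+1)).length (lprod (l.drop (i+1))) w 0‖ ≤ K) →
    ∀ (A : ℝ), 0 ≤ A → ∀ (k : ℕ),
    (∀ ξ : ℝ, 0 ≤ ξ → ‖polyApply l.length (lprod l) w ξ‖ ≤ A * (1 + ξ) ^ k * Real.exp (Λ * ξ)) →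
    ∀ ξ : ℝ, 0 ≤ ξ →
      ‖w ξ‖ ≤ (A + l.length * K) * (1 + ξ) ^ (k + l.length) * Real.exp (Λ * ξ) := by
  intro l
  induction l with
  | nil =>
    intro _ _ A hA k hb ξ hξ
    have := hb ξ hξ
    simpa [polyApply, iteratedDeriv_zero] using this
  | cons a l ih =>
    intro hre h0 A hA k hb ξ hξ
    have hstep : ∀ ξ : ℝ, 0 ≤ ξ → ‖polyApply l.length (lprod l) w ξ‖ ≤
        (K + A) * (1 + ξ) ^ (k + 1) * Real.exp (Λ * ξ) := by
      have hd : ∀ ζ : ℝ, HasDerivAt (polyApply l.length (lprod l) w)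
          (polyApply (a :: l).length (lprod (a :: l)) w ζ
            + a * polyApply l.length (lprod l) w ζ) ζ := by
        intro ζ
        have := polyApply_step hw (lprod_natDegree_le l) a ζ
        rwa [← lprod_cons, show l.length + 1 = (a :: l).length from rfl] at this
      have hgs := gronwall_step a Λ (hre a (by simp))
        (polyApply l.length (lprod l) w) (polyApply (a :: l).length (lprod (a :: l)) w)
        hd (polyApply_continuous hw _ _) A hA k hb
      intro ζ hζ
      have h00 : ‖polyApply l.length (lprod l) w 0‖ ≤ K := by
        have := h0 0
        simpa using this
      calc ‖polyApply l.length (lprod l) w ζ‖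
          ≤ (‖polyApply l.length (lprod l) w 0‖ + A * ζ * (1 + ζ) ^ k) * Real.exp (Λ * ζ) :=
            hgs ζ hζ
        _ ≤ (K + A) * (1 + ζ) ^ (k + 1) * Real.exp (Λ * ζ) := by
            have h1 : ‖polyApply l.length (lprod l) w 0‖ + A * ζ * (1 + ζ) ^ k
                ≤ (K + A) * (1 + ζ) ^ (k + 1) := by
              have hp : (0:ℝ) ≤ (1 + ζ) ^ k := by positivity
              have hpk : (1:ℝ) ≤ (1 + ζ) ^ (k+1) := one_le_pow₀ (by linarith)
              have h2 : A * ζ * (1 + ζ) ^ k ≤ A * (1 + ζ) ^ (k + 1) := by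
                rw [pow_succ]
                nlinarith
              nlinarith
            have := Real.exp_nonneg (Λ * ζ)
            nlinarith [norm_nonneg (polyApply l.length (lprod l) w 0),
              pow_nonneg (by linarith : (0:ℝ) ≤ 1 + ζ) (k+1)]
    have h0' : ∀ i : ℕ, ‖polyApply (l.drop (i+1)).length (lprod (l.drop (i+1))) w 0‖ ≤ K :=
      fun i => h0 (i + 1)
    have hfin := ih (fun b hb => hre b (by simp [hb])) h0' (K + A) (by linarith) (k + 1)
      hstep ξ hξ
    have he : k + (a :: l).length = (k + 1) + l.length := by
      simp only [List.length_cons]; omega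
    have hc : A + ((a :: l).length : ℝ) * K = K + A + (l.length : ℝ) * K := by
      simp only [List.length_cons]; push_cast; ring
    rw [he, hc]
    exact hfin

/-! ### Facts about `charPoly` -/

variable {m : ℕ} {M : Fin m → ℂ}

lemma charPoly_tail_degree (hm : 1 ≤ m) :
    (∑ j : Fin m, C (M j) * X ^ (j : ℕ)).degree < ((m : ℕ) : WithBot ℕ) := by
  apply lt_of_le_of_lt (degree_sum_le _ _)
  rw [Finset.sup_lt_iff (by exact_mod_cast WithBot.bot_lt_coe m)]
  intro j _
  exact lt_of_le_of_lt (degree_C_mul_X_pow_le _ _) (by exact_mod_cast j.2)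

lemma charPoly_monic (hm : 1 ≤ m) : (charPoly m M).Monic :=
  monic_X_pow_sub (charPoly_tail_degree hm)

lemma charPoly_degree (hm : 1 ≤ m) : (charPoly m M).degree = m := by
  unfold charPoly
  rw [degree_sub_eq_left_of_degree_lt]
  · exact degree_X_pow m
  · rw [degree_X_pow]; exact charPoly_tail_degree hm

lemma charPoly_natDegree (hm : 1 ≤ m) : (charPoly m M).natDegree = m :=
  natDegree_eq_of_degree_eq_some (charPoly_degree hm)

lemma charPoly_roots_card (hm : 1 ≤ m) : Multiset.card (charPoly m M).roots = m := by
  have h := splits_iff_card_roots.mp (IsAlgClosed.splits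
    (charPoly m M))
  rwa [charPoly_natDegree hm] at h

lemma charPoly_coeff_m (hm : 1 ≤ m) : (charPoly m M).coeff m = 1 := by
  have h := charPoly_monic (M := M) hm
  have h2 := charPoly_natDegree (M := M) hm
  rw [Monic, leadingCoeff, h2] at h
  exact h

lemma charPoly_coeff_lt (j : Fin m) : (charPoly m M).coeff j = -(M j) := by
  unfold charPoly
  rw [coeff_sub, coeff_X_pow, finset_sum_coeff]
  have h1 : (if (j : ℕ) = m then (1:ℂ) else 0) = 0 := by
    simp [Nat.ne_of_lt j.2]
  rw [h1]
  have h2 : ∀ i : Fin m, (C (M i) * X ^ (i : ℕ)).coeff j = if i = j then M j else 0 := by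
    intro i
    rw [coeff_C_mul, coeff_X_pow]
    by_cases h : i = j
    · subst h; simp
    · have : (j : ℕ) ≠ (i : ℕ) := fun hc => h (Fin.ext hc.symm)
      simp [this, h]
  rw [Finset.sum_congr rfl fun i _ => h2 i, Finset.sum_ite_eq' Finset.univ j fun _ => M j]
  simp

lemma charPoly_eq_lprod (hm : 1 ≤ m) :
    charPoly m M = lprod (charPoly m M).roots.toList := by
  have hl : lprod (charPoly m M).roots.toList
      = (Multiset.map (fun a => X - C a) (charPoly m M).roots).prod := by
    unfold lprod
    conv_rhs => rw [← Multiset.coe_toList (charPoly m M).roots]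
    rw [Multiset.map_coe, Multiset.prod_coe]
  rw [hl]
  exact (IsAlgClosed.splits _).eq_prod_roots_of_monic (charPoly_monic hm)

lemma roots_toList_length (hm : 1 ≤ m) : (charPoly m M).roots.toList.length = m := by
  rw [Multiset.length_toList, charPoly_roots_card hm]

lemma root_eval (hm : 1 ≤ m) {z : ℂ} (hz : z ∈ (charPoly m M).roots) :
    z ^ m = ∑ j : Fin m, M j * z ^ (j : ℕ) := by
  have hne : charPoly m M ≠ 0 := (charPoly_monic hm).ne_zero
  have h := (mem_roots hne).mp hz
  have : eval z (charPoly m M) = 0 := h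
  unfold charPoly at this
  simp only [eval_sub, eval_pow, eval_X, eval_finset_sum, eval_mul, eval_C] at this
  linear_combination this

lemma root_norm_le (hm : 1 ≤ m) {Ca : ℝ} (hCa : 0 ≤ Ca) (hM : ∀ j, ‖M j‖ ≤ Ca) {z : ℂ}
    (hz : z ∈ (charPoly m M).roots) : ‖z‖ ≤ 1 + m * Ca := by
  by_cases h1 : ‖z‖ ≤ 1
  · have : (0:ℝ) ≤ m * Ca := by positivity
    linarith
  push_neg at h1
  have hz1 : (1:ℝ) ≤ ‖z‖ := le_of_lt h1
  have heval := root_eval hm hz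
  have hb : ‖z‖ ^ m ≤ m * (Ca * ‖z‖ ^ (m - 1)) := by
    calc ‖z‖ ^ m = ‖z ^ m‖ := (norm_pow z m).symm
    _ = ‖∑ j : Fin m, M j * z ^ (j : ℕ)‖ := by rw [heval]
    _ ≤ ∑ j : Fin m, ‖M j * z ^ (j : ℕ)‖ := norm_sum_le _ _
    _ ≤ ∑ _j : Fin m, Ca * ‖z‖ ^ (m - 1) := by
        apply Finset.sum_le_sum
        intro j _
        rw [norm_mul, norm_pow]
        exact mul_le_mul (hM j) (pow_le_pow_right₀ hz1 (by omega)) (by positivity) hCa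
    _ = m * (Ca * ‖z‖ ^ (m - 1)) := by rw [Finset.sum_const]; simp [mul_comm]
  have hq : (0:ℝ) < ‖z‖ ^ (m - 1) := by positivity
  have hzm : ‖z‖ ^ m = ‖z‖ * ‖z‖ ^ (m - 1) := by
    conv_lhs => rw [show m = (m - 1) + 1 from by omega]
    rw [pow_succ]; ring
  rw [hzm] at hb
  have : ‖z‖ ≤ m * Ca := by
    have := le_of_mul_le_mul_right
      (by linarith [hb] : ‖z‖ * ‖z‖ ^ (m-1) ≤ (m * Ca) * ‖z‖ ^ (m-1)) hq
    linarith
  linarith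

lemma root_re_le {z : ℂ} (hz : z ∈ (charPoly m M).roots) : z.re ≤ maxReRoots m M := by
  apply le_csSup
  · exact ((charPoly m M).roots.finite_toSet.image _).bddAbove
  · exact ⟨z, hz, rfl⟩

lemma polyApply_charPoly (hm : 1 ≤ m) (w : ℝ → ℂ) (ξ : ℝ) :
    polyApply m (charPoly m M) w ξ
      = iteratedDeriv m w ξ - ∑ j : Fin m, M j * iteratedDeriv (j : ℕ) w ξ := by
  unfold polyApply
  have hFin : ∑ j ∈ range m, (-(charPoly m M).coeff j) * iteratedDeriv j w ξ
      = ∑ j : Fin m, M j * iteratedDeriv (j : ℕ) w ξ := by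
    rw [Finset.sum_range]
    exact Finset.sum_congr rfl fun j _ => by rw [charPoly_coeff_lt j]; ring
  have hsum : ∑ j ∈ range m, (charPoly m M).coeff j * iteratedDeriv j w ξ
      = -∑ j : Fin m, M j * iteratedDeriv (j : ℕ) w ξ := by
    rw [← hFin, ← Finset.sum_neg_distrib]
    exact Finset.sum_congr rfl fun _ _ => by ring
  rw [Finset.sum_range_succ, charPoly_coeff_m hm, hsum]
  ring

/-! ### The key estimate for the solution itself -/

lemma key_estimate (m : ℕ) (hm : 1 ≤ m) (Ca Cw : ℝ) (hCa : 0 ≤ Ca) (hCw : 0 ≤ Cw) :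
    ∃ C : ℝ, 0 ≤ C ∧ ∀ (M N : Fin m → ℂ), (∀ j, ‖M j‖ ≤ Ca) → (∀ j, ‖N j‖ ≤ Cw) →
      ∀ w : ℝ → ℂ, AllDiff w → IsCauchySolution m M N w →
        ∀ ξ : ℝ, 0 ≤ ξ → ‖w ξ‖ ≤ C * (1 + ξ) ^ (m - 1) * Real.exp (maxReRoots m M * ξ) := by
  set R : ℝ := 1 + m * Ca with hRdef
  have hR : 0 ≤ R := by positivity
  set K : ℝ := m * ((2 + m * Ca) ^ m * Cw) with hKdef
  have hK : 0 ≤ K := by positivity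
  refine ⟨m * K, by positivity, ?_⟩
  intro M N hM hN w hw hsol
  obtain ⟨hdiff, hode, hinit⟩ := hsol
  set Λ : ℝ := maxReRoots m M with hΛdef
  set L : List ℂ := (charPoly m M).roots.toList with hLdef
  have hlen : L.length = m := roots_toList_length hm
  have hmem : ∀ a ∈ L, a ∈ (charPoly m M).roots := fun a ha => (Multiset.mem_toList).mp ha
  have hre : ∀ a ∈ L, a.re ≤ Λ := fun a ha => root_re_le (hmem a ha)
  have hnrm : ∀ a ∈ L, ‖a‖ ≤ R := fun a ha => root_norm_le hm hCa hM (hmem a ha)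
  -- the constant bound at 0 for any sublist
  have hK0 : ∀ s : List ℂ, s.length ≤ m - 1 → (∀ a ∈ s, ‖a‖ ≤ R) →
      ‖polyApply s.length (lprod s) w 0‖ ≤ K := by
    intro s hsl hsa
    have hcoeff := lprod_coeff_bound R hR s hsa
    have hterm : ∀ j ∈ range (s.length + 1),
        ‖(lprod s).coeff j * iteratedDeriv j w 0‖ ≤ (2 + m * Ca) ^ m * Cw := by
      intro j hj
      have hjm : j < m := by
        have := Finset.mem_range.mp hj
        omega
      have hval : iteratedDeriv j w 0 = N ⟨j, hjm⟩ := hinit ⟨j, hjm⟩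
      rw [norm_mul, hval]
      have hc1 : ‖(lprod s).coeff j‖ ≤ (1 + R) ^ s.length := hcoeff j
      have hc2 : (1 + R : ℝ) ^ s.length ≤ (1 + R) ^ m :=
        pow_le_pow_right₀ (by linarith) (by omega)
      have h1R : (1 + R : ℝ) = 2 + m * Ca := by rw [hRdef]; ring
      rw [h1R] at hc1 hc2
      exact mul_le_mul (le_trans hc1 hc2) (hN ⟨j, hjm⟩) (norm_nonneg _) (by positivity)
    calc ‖polyApply s.length (lprod s) w 0‖
        ≤ ∑ j ∈ range (s.length + 1), ‖(lprod s).coeff j * iteratedDeriv j w 0‖ :=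
          norm_sum_le _ _
      _ ≤ ∑ _j ∈ range (s.length + 1), (2 + m * Ca) ^ m * Cw :=
          Finset.sum_le_sum hterm
      _ = (s.length + 1) * ((2 + m * Ca) ^ m * Cw) := by
          rw [Finset.sum_const, Finset.card_range]; simp
      _ ≤ K := by
          rw [hKdef]
          have h1 : (s.length + 1 : ℝ) ≤ m := by
            have : s.length + 1 ≤ m := by omega
            exact_mod_cast this
          have h2 : (0:ℝ) ≤ (2 + m * Ca) ^ m * Cw := by positivity
          nlinarith
  -- the full operator annihilates w on the half line
  have hzero : ∀ ξ : ℝ, 0 ≤ ξ → polyApply L.length (lprod L) w ξ = 0 := by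
    intro ξ hξ
    rw [hlen, ← charPoly_eq_lprod hm, polyApply_charPoly hm, hode ξ hξ]
    ring
  -- split off the first root
  rcases hL : L with _ | ⟨a, l⟩
  · rw [hL] at hlen; simp at hlen; omega
  have hlen' : l.length = m - 1 := by
    rw [hL] at hlen; simp at hlen; omega
  have hreL : ∀ b ∈ a :: l, b.re ≤ Λ := by rw [← hL]; exact hre
  have hnrmL : ∀ b ∈ a :: l, ‖b‖ ≤ R := by rw [← hL]; exact hnrm
  -- step 1: bound v := polyApply l
  have hd : ∀ ζ : ℝ, HasDerivAt (polyApply l.length (lprod l) w)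
      (polyApply (a :: l).length (lprod (a :: l)) w ζ
        + a * polyApply l.length (lprod l) w ζ) ζ := by
    intro ζ
    have := polyApply_step hw (lprod_natDegree_le l) a ζ
    rwa [← lprod_cons, show l.length + 1 = (a :: l).length from rfl] at this
  have hzero' : ∀ ξ : ℝ, 0 ≤ ξ → polyApply (a :: l).length (lprod (a :: l)) w ξ = 0 := by
    intro ξ hξ
    rw [← hL]
    exact hzero ξ hξ
  have hgs := gronwall_step a Λ (hreL a (by simp))
    (polyApply l.length (lprod l) w) (polyApply (a :: l).length (lprod (a :: l)) w)
    hd (polyApply_continuous hw _ _) 0 le_rfl 0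
    (fun ξ hξ => by rw [hzero' ξ hξ, norm_zero]; simp)
  have hv0 : ‖polyApply l.length (lprod l) w 0‖ ≤ K :=
    hK0 l (by omega) (fun b hb => hnrmL b (by simp [hb]))
  have hstep : ∀ ξ : ℝ, 0 ≤ ξ → ‖polyApply l.length (lprod l) w ξ‖ ≤
      K * (1 + ξ) ^ 0 * Real.exp (Λ * ξ) := by
    intro ξ hξ
    have := hgs ξ hξ
    simp only [pow_zero, mul_one] at this ⊢
    have he := Real.exp_nonneg (Λ * ξ)
    nlinarith
  -- chain on l
  have h0 : ∀ i : ℕ, ‖polyApply (l.drop (i+1)).length (lprod (l.drop (i+1))) w 0‖ ≤ K := by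
    intro i
    apply hK0
    · have : (l.drop (i+1)).length = l.length - (i+1) := List.length_drop
      omega
    · intro b hb
      exact hnrmL b (by simp [List.mem_of_mem_drop hb])
  have hchain := chain hw Λ K hK l (fun b hb => hreL b (by simp [hb])) h0 K hK 0 hstep
  intro ξ hξ
  have := hchain ξ hξ
  rw [hlen'] at this
  have hcast : (K + ((m - 1 : ℕ) : ℝ) * K) = m * K := by
    have : ((m - 1 : ℕ) : ℝ) = (m : ℝ) - 1 := by
      have : (1:ℕ) ≤ m := hm
      push_cast [Nat.cast_sub this]
      ring
    rw [this]; ring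
  rw [zero_add] at this
  calc ‖w ξ‖ ≤ (K + ((m-1:ℕ):ℝ) * K) * (1 + ξ) ^ (m - 1) * Real.exp (Λ * ξ) := this
  _ = m * K * (1 + ξ) ^ (m - 1) * Real.exp (Λ * ξ) := by rw [hcast]
  _ = m * K * (1 + ξ) ^ (m - 1) * Real.exp (maxReRoots m M * ξ) := by rw [hΛdef]

/-! ### Differentiating solutions -/

lemma deriv_eq_on_halfline {F G : ℝ → ℂ} (hF : Continuous (deriv F)) (hG : Continuous (deriv G))
    (h : ∀ ξ : ℝ, 0 ≤ ξ → F ξ = G ξ) : ∀ ξ : ℝ, 0 ≤ ξ → deriv F ξ = deriv G ξ := by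
  have hpos : ∀ ξ : ℝ, 0 < ξ → deriv F ξ = deriv G ξ := by
    intro ξ hξ
    have hev : F =ᶠ[nhds ξ] G := by
      filter_upwards [isOpen_Ioi.mem_nhds (show ξ ∈ Set.Ioi (0:ℝ) from hξ)] with x hx
      exact h x (le_of_lt hx)
    exact Filter.EventuallyEq.deriv_eq hev
  intro ξ hξ
  rcases eq_or_lt_of_le hξ with heq | hlt
  · subst heq
    have hev : deriv F =ᶠ[nhdsWithin (0:ℝ) (Set.Ioi 0)] deriv G := by
      filter_upwards [self_mem_nhdsWithin] with x hx
      exact hpos x hx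
    have h1 : Filter.Tendsto (deriv F) (nhdsWithin (0:ℝ) (Set.Ioi 0)) (nhds (deriv F 0)) :=
      (hF.tendsto 0).mono_left nhdsWithin_le_nhds
    have h2 : Filter.Tendsto (deriv G) (nhdsWithin (0:ℝ) (Set.Ioi 0)) (nhds (deriv G 0)) :=
      (hG.tendsto 0).mono_left nhdsWithin_le_nhds
    exact tendsto_nhds_unique (h1.congr' hev) h2
  · exact hpos ξ hlt

lemma shift_solution (m : ℕ) (hm : 1 ≤ m) (Ca : ℝ) (hCa : 0 ≤ Ca) (Cw' : ℝ) (hCw' : 0 ≤ Cw')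
    (M N : Fin m → ℂ) (hM : ∀ j, ‖M j‖ ≤ Ca) (hN : ∀ j, ‖N j‖ ≤ Cw') (w : ℝ → ℂ)
    (hw : AllDiff w) (hsol : IsCauchySolution m M N w) :
    ∃ N' : Fin m → ℂ, (∀ j, ‖N' j‖ ≤ (1 + m * Ca) * Cw') ∧
      IsCauchySolution m M N' (deriv w) := by
  obtain ⟨hdiff, hode, hinit⟩ := hsol
  refine ⟨fun j => iteratedDeriv ((j : ℕ) + 1) w 0, ?_, ?_, ?_, ?_⟩
  · intro j
    show ‖iteratedDeriv ((j : ℕ) + 1) w 0‖ ≤ (1 + m * Ca) * Cw'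
    by_cases h : (j : ℕ) + 1 < m
    · have : iteratedDeriv ((j : ℕ) + 1) w 0 = N ⟨(j : ℕ) + 1, h⟩ := hinit ⟨(j : ℕ) + 1, h⟩
      rw [this]
      have h1 : (0:ℝ) ≤ m * Ca := by positivity
      nlinarith [hN (⟨(j : ℕ) + 1, h⟩ : Fin m), norm_nonneg (N (⟨(j : ℕ) + 1, h⟩ : Fin m))]
    · have hjm : (j : ℕ) + 1 = m := by have := j.2; omega
      rw [hjm, hode 0 le_rfl]
      calc ‖∑ k : Fin m, M k * iteratedDeriv (k : ℕ) w 0‖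
          ≤ ∑ k : Fin m, ‖M k * iteratedDeriv (k : ℕ) w 0‖ := norm_sum_le _ _
        _ ≤ ∑ _k : Fin m, Ca * Cw' := by
            apply Finset.sum_le_sum
            intro k _
            rw [norm_mul, hinit k]
            exact mul_le_mul (hM k) (hN k) (norm_nonneg _) hCa
        _ = m * (Ca * Cw') := by rw [Finset.sum_const]; simp [mul_comm]
        _ ≤ (1 + m * Ca) * Cw' := by nlinarith
  · intro i _
    rw [← iteratedDeriv_succ']
    exact hw (i + 1)
  · -- the ODE for deriv w
    intro ξ hξ
    have hF : Continuous (deriv (iteratedDeriv m w)) := by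
      rw [← iteratedDeriv_succ]
      exact hw.cont (m + 1)
    set G : ℝ → ℂ := fun ζ => ∑ j : Fin m, M j * iteratedDeriv (j : ℕ) w ζ with hGdef
    have hGd : ∀ ζ : ℝ, HasDerivAt G (∑ j : Fin m, M j * iteratedDeriv ((j : ℕ) + 1) w ζ) ζ := by
      intro ζ
      apply HasDerivAt.fun_sum
      intro j _
      have := ((hw (j : ℕ)).differentiableAt (x := ζ)).hasDerivAt
      rw [iteratedDeriv_succ]
      exact this.const_mul _
    have hGderiv : deriv G = fun ζ => ∑ j : Fin m, M j * iteratedDeriv ((j : ℕ) + 1) w ζ :=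
      funext fun ζ => (hGd ζ).deriv
    have hG : Continuous (deriv G) := by
      rw [hGderiv]
      exact continuous_finset_sum _ fun j _ => continuous_const.mul (hw.cont _)
    have heq := deriv_eq_on_halfline hF hG hode ξ hξ
    calc iteratedDeriv m (deriv w) ξ = iteratedDeriv (m + 1) w ξ := by
          rw [iteratedDeriv_succ']
      _ = deriv (iteratedDeriv m w) ξ := by rw [iteratedDeriv_succ]
      _ = deriv G ξ := heq
      _ = ∑ j : Fin m, M j * iteratedDeriv ((j : ℕ) + 1) w ξ := by rw [hGderiv]
      _ = ∑ j : Fin m, M j * iteratedDeriv (j : ℕ) (deriv w) ξ := by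
          apply Finset.sum_congr rfl
          intro j _
          rw [iteratedDeriv_succ']
  · intro j
    show iteratedDeriv (j : ℕ) (deriv w) 0 = iteratedDeriv ((j : ℕ) + 1) w 0
    rw [iteratedDeriv_succ']

/-! ### power comparison -/

lemma pow_one_add_le (n : ℕ) (ξ : ℝ) (hξ : 0 ≤ ξ) : (1 + ξ) ^ n ≤ 2 ^ n * (1 + ξ ^ n) := by
  rcases le_total ξ 1 with h | h
  · have h1 : (1 + ξ) ^ n ≤ 2 ^ n := pow_le_pow_left₀ (by linarith) (by linarith) n
    have h2 : (0:ℝ) ≤ ξ ^ n := by positivity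
    nlinarith [pow_nonneg (show (0:ℝ) ≤ 2 by norm_num) n]
  · have h1 : (1 + ξ) ^ n ≤ (2 * ξ) ^ n := pow_le_pow_left₀ (by linarith) (by linarith) n
    rw [mul_pow] at h1
    have h2 : (0:ℝ) ≤ 2 ^ n := by positivity
    nlinarith

end UEP

open UEP in
/-- for every natural `i` (not only `i < m`) there is a uniform
exponential-power estimate `|w^{(i)}(ξ)| ≤ C̃_i (1 + ξ^{m-1}) e^{Λ̄_m(M) ξ}`
for infinitely differentiable solutions of the Cauchy problem. -/
theorem uniform_exp_power_estimate_all_derivatives (m : ℕ) (hm : 1 ≤ m) (Ca Cw : ℝ)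
    (hCa : 0 ≤ Ca) (hCw : 0 ≤ Cw) :
    ∀ i : ℕ, ∃ Ct : ℝ, 0 ≤ Ct ∧
      ∀ (M N : Fin m → ℂ), (∀ j, ‖M j‖ ≤ Ca) → (∀ j, ‖N j‖ ≤ Cw) →
        ∀ w : ℝ → ℂ, ContDiff ℝ (⊤ : ℕ∞) w → IsCauchySolution m M N w →
          ∀ ξ : ℝ, 0 ≤ ξ →
            ‖iteratedDeriv i w ξ‖ ≤
              Ct * (1 + ξ ^ (m - 1)) * Real.exp (maxReRoots m M * ξ) := by
  intro i
  -- data bound after i differentiations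
  have hCwi : (0:ℝ) ≤ (1 + m * Ca) ^ i * Cw := by positivity
  obtain ⟨C, hC, hkey⟩ := key_estimate m hm Ca ((1 + m * Ca) ^ i * Cw) hCa hCwi
  refine ⟨C * 2 ^ (m - 1), by positivity, ?_⟩
  intro M N hM hN w hw hsol
  -- iteratedDeriv i w is a solution with data bounded by (1+m*Ca)^i * Cw
  have hAD : AllDiff w := AllDiff.of_contDiff hw
  have main : ∀ k : ℕ, ∃ N' : Fin m → ℂ, (∀ j, ‖N' j‖ ≤ (1 + m * Ca) ^ k * Cw) ∧
      IsCauchySolution m M N' (iteratedDeriv k w) := by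
    intro k
    induction k with
    | zero =>
      refine ⟨N, ?_, ?_⟩
      · intro j; simpa using hN j
      · rw [iteratedDeriv_zero]; exact hsol
    | succ k ih =>
      obtain ⟨N₁, hN₁, hsol₁⟩ := ih
      have hADk : AllDiff (iteratedDeriv k w) := hAD.iter k
      obtain ⟨N', hN', hsol'⟩ := shift_solution m hm Ca hCa ((1 + m * Ca) ^ k * Cw)
        (by positivity) M N₁ hM hN₁ (iteratedDeriv k w) hADk hsol₁
      refine ⟨N', ?_, ?_⟩
      · intro j
        calc ‖N' j‖ ≤ (1 + m * Ca) * ((1 + m * Ca) ^ k * Cw) := hN' j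
        _ = (1 + m * Ca) ^ (k + 1) * Cw := by rw [pow_succ]; ring
      · rw [iteratedDeriv_succ]
        exact hsol'
  obtain ⟨N', hN', hsol'⟩ := main i
  have hbound := hkey M N' hM hN' (iteratedDeriv i w) (hAD.iter i) hsol'
  intro ξ hξ
  have h1 := hbound ξ hξ
  have h2 : (1 + ξ) ^ (m - 1) ≤ 2 ^ (m - 1) * (1 + ξ ^ (m - 1)) := pow_one_add_le (m - 1) ξ hξ
  calc ‖iteratedDeriv i w ξ‖
      ≤ C * (1 + ξ) ^ (m - 1) * Real.exp (maxReRoots m M * ξ) := h1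
    _ ≤ C * (2 ^ (m - 1) * (1 + ξ ^ (m - 1))) * Real.exp (maxReRoots m M * ξ) := by
        exact mul_le_mul_of_nonneg_right (mul_le_mul_of_nonneg_left h2 hC)
          (Real.exp_nonneg _)
    _ = C * 2 ^ (m - 1) * (1 + ξ ^ (m - 1)) * Real.exp (maxReRoots m M * ξ) := by ring
end

section
/- Let m ≥ 1 and let C_a ≥ 0, C_w ≥ 0. Then there exists a constant C̃ ≥ 0 such that for every M = (a_0, …, a_{m−1}) ∈ ℂ^m with |a_j| ≤ C_a for all j, every N = (w^0, …, w^{m−1}) ∈ ℂ^m with |w^j| ≤ C_w for all j, and every solution w of the Cauchy problem with coefficients M and initial data N, one has the fully uniform (parameter-independent) bound |w^{(i)}(ξ)| ≤ C̃ (1 + ξ^{m−1}) e^{(1 + C_a) ξ} for all i ∈ {0, …, m−1} and all ξ ≥ 0. -/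
open Polynomial

/-- fully uniform (parameter-independent) estimate
`|w^{(i)}(ξ)| ≤ C̃ (1 + ξ^{m-1}) e^{(1 + C_a) ξ}` for solutions of the Cauchy problem
with coefficients and initial data in bounded boxes. -/
theorem fully_uniform_estimate (m : ℕ) (hm : 1 ≤ m) (Ca Cw : ℝ)
    (hCa : 0 ≤ Ca) (hCw : 0 ≤ Cw) :
    ∃ Ct : ℝ, 0 ≤ Ct ∧
      ∀ (M N : Fin m → ℂ), (∀ j, ‖M j‖ ≤ Ca) → (∀ j, ‖N j‖ ≤ Cw) →
        ∀ w : ℝ → ℂ, IsCauchySolution m M N w →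
          ∀ i < m, ∀ ξ : ℝ, 0 ≤ ξ →
            ‖iteratedDeriv i w ξ‖ ≤
              Ct * (1 + ξ ^ (m - 1)) * Real.exp ((1 + Ca) * ξ) := by
  refine ⟨m * Cw, by positivity, fun M N hM hN w hw i hi ξ hξ => ?_⟩
  obtain ⟨hdiff, hode, hinit⟩ := hw
  set E := PiLp 1 (fun _ : Fin m => ℂ)
  set V : ℝ → E := fun ξ => (WithLp.equiv 1 _).symm (fun j : Fin m => iteratedDeriv (j : ℕ) w ξ)
    with hV
  set V' : ℝ → E := fun ξ =>
    (WithLp.equiv 1 _).symm (fun j : Fin m => iteratedDeriv ((j : ℕ) + 1) w ξ) with hV'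
  have hnorm : ∀ x : E, ‖x‖ = ∑ j : Fin m, ‖x j‖ := by
    intro x
    rw [PiLp.norm_eq_sum (by norm_num : 0 < (1 : ENNReal).toReal)]
    simp
  -- derivative of V
  have hVderiv : ∀ x : ℝ, HasDerivAt V (V' x) x := by
    intro x
    have hU : HasDerivAt (fun t : ℝ => (fun j : Fin m => iteratedDeriv (j : ℕ) w t))
        (fun j : Fin m => iteratedDeriv ((j : ℕ) + 1) w x) x := by
      rw [hasDerivAt_pi]
      intro j
      rw [iteratedDeriv_succ]
      exact (hdiff j j.2 x).hasDerivAt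
    exact ((PiLp.continuousLinearEquiv 1 ℝ (fun _ : Fin m => ℂ)).symm :
      (Fin m → ℂ) →L[ℝ] E).hasFDerivAt.comp_hasDerivAt x hU
  -- Gronwall bound on [0, b] for any b
  have key : ∀ x : ℝ, 0 ≤ x → ‖V x‖ ≤ (m * Cw) * Real.exp ((1 + Ca) * x) := by
    intro b hb
    have hcont : ContinuousOn V (Set.Icc 0 b) :=
      (fun x _ => (hVderiv x).continuousAt.continuousWithinAt)
    have hderiv : ∀ x ∈ Set.Ico (0:ℝ) b, HasDerivWithinAt V (V' x) (Set.Ici x) x :=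
      fun x _ => (hVderiv x).hasDerivWithinAt
    have ha : ‖V 0‖ ≤ m * Cw := by
      rw [hnorm]
      calc ∑ j : Fin m, ‖V 0 j‖ ≤ ∑ _j : Fin m, Cw := by
            refine Finset.sum_le_sum fun j _ => ?_
            show ‖iteratedDeriv (j : ℕ) w 0‖ ≤ Cw
            rw [hinit j]; exact hN j
        _ = m * Cw := by simp [mul_comm]
    have bound : ∀ x ∈ Set.Ico (0:ℝ) b, ‖V' x‖ ≤ (1 + Ca) * ‖V x‖ + 0 := by
      intro x hx
      rw [add_zero, hnorm, hnorm]
      set g : ℕ → ℝ := fun i => ‖iteratedDeriv i w x‖ with hg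
      have hsum1 : ∑ j : Fin m, ‖V' x j‖ = ∑ j ∈ Finset.range m, g (j + 1) := by
        exact Fin.sum_univ_eq_sum_range (fun j => g (j + 1)) m
      have hsum2 : ∑ j : Fin m, ‖V x j‖ = ∑ j ∈ Finset.range m, g j := by
        exact Fin.sum_univ_eq_sum_range g m
      rw [hsum1, hsum2]
      have hmsplit : ∑ j ∈ Finset.range m, g (j + 1)
          = (∑ j ∈ Finset.range (m - 1), g (j + 1)) + g m := by
        obtain ⟨k, rfl⟩ := Nat.exists_eq_add_of_le hm
        simp only [Nat.add_sub_cancel_left] at *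
        rw [Nat.add_comm 1 k, Finset.sum_range_succ]
      have h1 : ∑ j ∈ Finset.range (m - 1), g (j + 1) ≤ ∑ j ∈ Finset.range m, g j := by
        have : ∑ j ∈ Finset.range (m - 1), g (j + 1) = ∑ j ∈ Finset.Ico 1 m, g j := by
          rw [Finset.sum_Ico_eq_sum_range]
          simp [add_comm]
        rw [this]
        refine Finset.sum_le_sum_of_subset_of_nonneg ?_ (fun j _ _ => norm_nonneg _)
        intro j hj
        simp only [Finset.mem_Ico] at hj
        simp [hj.2]
      have h2 : g m ≤ Ca * ∑ j ∈ Finset.range m, g j := by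
        rw [hg]
        simp only
        rw [hode x hx.1]
        calc ‖∑ j : Fin m, M j * iteratedDeriv (j : ℕ) w x‖
            ≤ ∑ j : Fin m, ‖M j * iteratedDeriv (j : ℕ) w x‖ := norm_sum_le _ _
          _ ≤ ∑ j : Fin m, Ca * ‖iteratedDeriv (j : ℕ) w x‖ := by
              refine Finset.sum_le_sum fun j _ => ?_
              rw [norm_mul]
              exact mul_le_mul_of_nonneg_right (hM j) (norm_nonneg _)
          _ = Ca * ∑ j ∈ Finset.range m, g j := by
              rw [Finset.mul_sum, Fin.sum_univ_eq_sum_range (fun j => Ca * g j)]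
      calc ∑ j ∈ Finset.range m, g (j + 1)
          = (∑ j ∈ Finset.range (m - 1), g (j + 1)) + g m := hmsplit
        _ ≤ (∑ j ∈ Finset.range m, g j) + Ca * ∑ j ∈ Finset.range m, g j := add_le_add h1 h2
        _ = (1 + Ca) * ∑ j ∈ Finset.range m, g j := by ring
    have := norm_le_gronwallBound_of_norm_deriv_right_le hcont hderiv ha bound b
      (Set.right_mem_Icc.2 hb)
    rwa [gronwallBound_ε0, sub_zero] at this
  -- conclude
  have hterm : ‖iteratedDeriv i w ξ‖ ≤ ‖V ξ‖ := by
    rw [hnorm]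
    have : ‖iteratedDeriv i w ξ‖ = ‖V ξ (⟨i, hi⟩ : Fin m)‖ := rfl
    rw [this]
    exact Finset.single_le_sum (fun j _ => norm_nonneg _) (Finset.mem_univ _)
  have hpoly : (1 : ℝ) ≤ 1 + ξ ^ (m - 1) := by
    have : (0:ℝ) ≤ ξ ^ (m - 1) := pow_nonneg hξ _
    linarith
  calc ‖iteratedDeriv i w ξ‖ ≤ (m * Cw) * Real.exp ((1 + Ca) * ξ) :=
        hterm.trans (key ξ hξ)
    _ ≤ (m * Cw) * (1 + ξ ^ (m - 1)) * Real.exp ((1 + Ca) * ξ) := by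
        have h0 : (0:ℝ) ≤ m * Cw := by positivity
        nlinarith [Real.exp_pos ((1 + Ca) * ξ), mul_nonneg h0 (Real.exp_pos ((1+Ca)*ξ)).le]
end

section
/- Let m ≥ 1 and let M_0 ∈ ℂ^m. Then there exist functions λ^1, …, λ^m : ℂ^m → ℂ, each of which is continuous at the point M_0, such that for every M = (a_0, …, a_{m−1}) ∈ ℂ^m one has the factorization λ^m − a_{m−1}λ^{m−1} − ⋯ − a_1λ − a_0 = (λ − λ^1(M)) ⋯ (λ − λ^m(M)) as polynomials in λ. -/
/-!
The Vieta map, sending a tuple of roots `s` to the coefficients of `∏ i, (X - s i)`, is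
continuous, surjective (`ℂ` is algebraically closed) and proper (Cauchy's bound on roots), and
its fibres are the orbits of the permutations of the roots. A closed surjection whose fibres are
orbits of a family of open maps is open. For an open map with compact fibres, choosing in every
fibre a point nearest to a fixed root tuple of `M₀` gives a right inverse continuous at `M₀`.
-/

open Polynomial Function

theorem Fintype.exists_perm_eq_comp_of_map_univ_eq {ι α : Type*} [Fintype ι] [DecidableEq α]
    {t r : ι → α}
    (h : Multiset.map t Finset.univ.val = Multiset.map r Finset.univ.val) :
    ∃ σ : Equiv.Perm ι, t = r ∘ σ := by
  have hcard : ∀ a, Fintype.card {i // t i = a} = Fintype.card {i // r i = a} := fun a => by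
    simpa [Fintype.card_subtype, Multiset.count_map, eq_comm, Finset.card_def] using
      congrArg (Multiset.count a) h
  exact ⟨Equiv.ofFiberEquiv fun a => Fintype.equivOfCardEq (hcard a),
    funext fun i => (Equiv.ofFiberEquiv_map _ i).symm⟩

theorem IsClosedMap.isOpenMap_of_fibers_eq_orbits {ι X Y : Type*} [TopologicalSpace X]
    [TopologicalSpace Y] {f : X → Y} (hf : IsClosedMap f) (hsurj : Surjective f)
    (φ : ι → X → X) (hφ : ∀ i, IsOpenMap (φ i)) (hfφ : ∀ i x, f (φ i x) = f x)
    (hfib : ∀ x x', f x = f x' → ∃ i, x' = φ i x) : IsOpenMap f := by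
  intro U hU
  have hsat : f '' U = (f '' (⋃ i, φ i '' U)ᶜ)ᶜ := by
    ext y
    constructor
    · rintro ⟨u, hu, rfl⟩ ⟨x, hx, hxu⟩
      obtain ⟨i, rfl⟩ := hfib u x hxu.symm
      exact hx (Set.mem_iUnion.2 ⟨i, u, hu, rfl⟩)
    · intro hy
      obtain ⟨x, rfl⟩ := hsurj y
      obtain ⟨i, u, hu, rfl⟩ := Set.mem_iUnion.1 (not_not.1 fun hx => hy ⟨x, hx, rfl⟩)
      exact ⟨u, hu, (hfφ i u).symm⟩
  rw [hsat]
  exact (hf _ (isOpen_iUnion fun i => hφ i _ hU).isClosed_compl).isOpen_compl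

theorem IsOpenMap.exists_rightInverse_continuousAt {X Y : Type*} [MetricSpace X]
    [TopologicalSpace Y] {f : X → Y} (hf : IsOpenMap f) (hsurj : Surjective f)
    (hfib : ∀ y, IsCompact (f ⁻¹' {y})) (y₀ : Y) :
    ∃ g : Y → X, RightInverse g f ∧ ContinuousAt g y₀ := by
  obtain ⟨r, rfl⟩ := hsurj y₀
  have hnearest : ∀ y, ∃ x ∈ f ⁻¹' {y}, IsMinOn (dist · r) (f ⁻¹' {y}) x := fun y =>
    (hfib y).exists_isMinOn (hsurj y) (continuous_id.dist continuous_const).continuousOn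
  choose g hgf hgmin using hnearest
  have hgr : g (f r) = r := dist_le_zero.1 (by simpa using hgmin (f r) rfl)
  refine ⟨g, hgf, ?_⟩
  rw [ContinuousAt, hgr, Metric.tendsto_nhds]
  intro ε hε
  filter_upwards [hf.image_mem_nhds (Metric.ball_mem_nhds r hε)] with y ⟨x, hx, hxy⟩
  exact (hgmin y hxy).trans_lt hx

namespace RootContinuity

noncomputable def polyOfCoeffs {m : ℕ} (M : Fin m → ℂ) : ℂ[X] :=
  X ^ m - ∑ j : Fin m, C (M j) * X ^ (j : ℕ)

noncomputable def vieta (m : ℕ) (s : Fin m → ℂ) : Fin m → ℂ :=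
  fun j => -(∏ i, (X - C (s i))).coeff j

theorem monic_polyOfCoeffs {m : ℕ} (M : Fin m → ℂ) : (polyOfCoeffs M).Monic :=
  monic_X_pow_sub (degree_sum_fin_lt M)

theorem natDegree_polyOfCoeffs {m : ℕ} (M : Fin m → ℂ) : (polyOfCoeffs M).natDegree = m := by
  refine natDegree_eq_of_degree_eq_some ?_
  rw [polyOfCoeffs, degree_sub_eq_left_of_degree_lt, degree_X_pow]
  simpa using degree_sum_fin_lt M

theorem coeff_polyOfCoeffs {m : ℕ} (M : Fin m → ℂ) (j : Fin m) :
    (polyOfCoeffs M).coeff j = -M j := by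
  simp [polyOfCoeffs, coeff_X_pow, j.isLt.ne, coeff_C_mul, Fin.val_inj]

theorem eq_polyOfCoeffs_of_monic {p : ℂ[X]} (hp : p.Monic) :
    p = polyOfCoeffs fun j : Fin p.natDegree => -p.coeff j := by
  conv_lhs => rw [hp.as_sum]
  simp [polyOfCoeffs, sub_eq_add_neg, ← Finset.sum_neg_distrib, Fin.sum_univ_eq_sum_range
    (fun i => C (p.coeff i) * X ^ i)]

theorem monic_prod_X_sub_C {m : ℕ} (s : Fin m → ℂ) : (∏ i, (X - C (s i))).Monic :=
  monic_prod_of_monic _ _ fun i _ => monic_X_sub_C (s i)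

theorem natDegree_prod_X_sub_C {m : ℕ} (s : Fin m → ℂ) : (∏ i, (X - C (s i))).natDegree = m := by
  simp [natDegree_prod _ _ fun i _ => X_sub_C_ne_zero (s i)]

theorem prod_X_sub_C_eq_polyOfCoeffs_iff {m : ℕ} {s M : Fin m → ℂ} :
    ∏ i, (X - C (s i)) = polyOfCoeffs M ↔ vieta m s = M := by
  constructor
  · intro h
    funext j
    rw [vieta, h, coeff_polyOfCoeffs, neg_neg]
  · rintro rfl
    have := eq_polyOfCoeffs_of_monic (monic_prod_X_sub_C s)
    rwa [natDegree_prod_X_sub_C] at this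

theorem continuous_vieta (m : ℕ) : Continuous (vieta m) := by
  have hcoeff : ∀ s : Fin m → ℂ, ∀ j : Fin m, vieta m s j =
      -∑ t ∈ Finset.univ.powersetCard (m - j), ∏ i ∈ t, -s i := fun s j => by
    simpa [vieta, sub_eq_add_neg] using
      Finset.prod_X_add_C_coeff Finset.univ (fun i => -s i) (k := j) (by simp [j.isLt.le])
  simp_rw [continuous_pi_iff, hcoeff]
  intro j
  fun_prop

theorem vieta_surjective (m : ℕ) : Surjective (vieta m) := by
  intro M
  have hsplits : (polyOfCoeffs M).Splits := IsAlgClosed.splits _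
  set l := (polyOfCoeffs M).roots.toList
  have hlen : l.length = m := by
    rw [Multiset.length_toList, splits_iff_card_roots.mp hsplits, natDegree_polyOfCoeffs]
  refine ⟨fun i => l.get (i.cast hlen.symm), prod_X_sub_C_eq_polyOfCoeffs_iff.1 ?_⟩
  rw [Fin.prod_congr' (fun j => X - C (l.get j)) hlen.symm]
  refine (Fin.prod_univ_fun_getElem l fun a => X - C a).trans ?_
  rw [← Multiset.prod_coe, ← Multiset.map_coe, Multiset.coe_toList]
  exact (hsplits.eq_prod_roots_of_monic (monic_polyOfCoeffs M)).symm

theorem vieta_comp_perm {m : ℕ} (s : Fin m → ℂ) (σ : Equiv.Perm (Fin m)) :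
    vieta m (s ∘ σ) = vieta m s := by
  unfold vieta
  rw [← Equiv.prod_comp σ fun i => X - C (s i)]
  rfl

theorem exists_perm_of_vieta_eq {m : ℕ} {t r : Fin m → ℂ} (h : vieta m t = vieta m r) :
    ∃ σ : Equiv.Perm (Fin m), t = r ∘ σ := by
  have hroots : ∀ s : Fin m → ℂ, (∏ i, (X - C (s i))).roots = Multiset.map s Finset.univ.val :=
    fun s => by
      rw [Finset.prod_eq_multiset_prod,
        ← roots_multiset_prod_X_sub_C (Multiset.map s Finset.univ.val), Multiset.map_map]
      rfl
  have hprod : ∏ i, (X - C (t i)) = ∏ i, (X - C (r i)) := by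
    rw [prod_X_sub_C_eq_polyOfCoeffs_iff.2 h, prod_X_sub_C_eq_polyOfCoeffs_iff.2 rfl]
  exact Fintype.exists_perm_eq_comp_of_map_univ_eq (by rw [← hroots, ← hroots, hprod])

theorem cauchyBound_polyOfCoeffs_le {m : ℕ} (M : Fin m → ℂ) :
    cauchyBound (polyOfCoeffs M) ≤ ‖M‖₊ + 1 := by
  rw [cauchyBound, (monic_polyOfCoeffs M).leadingCoeff, nnnorm_one, div_one,
    natDegree_polyOfCoeffs, add_le_add_iff_right]
  refine Finset.sup_le fun j hj => ?_
  have hjm : j < m := Finset.mem_range.1 hj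
  simpa [coeff_polyOfCoeffs M ⟨j, hjm⟩] using nnnorm_le_pi_nnnorm M ⟨j, hjm⟩

theorem norm_le_of_vieta_eq {m : ℕ} {s M : Fin m → ℂ} (h : vieta m s = M) : ‖s‖ ≤ ‖M‖ + 1 := by
  refine (pi_norm_le_iff_of_nonneg (by positivity)).2 fun i => ?_
  have hroot : (polyOfCoeffs M).IsRoot (s i) := by
    rw [← prod_X_sub_C_eq_polyOfCoeffs_iff.2 h, IsRoot, eval_prod]
    exact Finset.prod_eq_zero (Finset.mem_univ i) (by simp)
  have := (hroot.norm_lt_cauchyBound (monic_polyOfCoeffs M).ne_zero).trans_le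
    (cauchyBound_polyOfCoeffs_le M)
  exact_mod_cast this.le

theorem isProperMap_vieta (m : ℕ) : IsProperMap (vieta m) := by
  refine isProperMap_iff_isCompact_preimage.2 ⟨continuous_vieta m, fun K hK => ?_⟩
  obtain ⟨R, hR⟩ := hK.isBounded.subset_closedBall 0
  refine (isCompact_closedBall (0 : Fin m → ℂ) (R + 1)).of_isClosed_subset
    (hK.isClosed.preimage (continuous_vieta m)) fun s hs => ?_
  have := hR hs
  rw [Metric.mem_closedBall, dist_zero_right] at this ⊢
  linarith [norm_le_of_vieta_eq (rfl : vieta m s = _)]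

theorem isOpenMap_vieta (m : ℕ) : IsOpenMap (vieta m) :=
  (isProperMap_vieta m).isClosedMap.isOpenMap_of_fibers_eq_orbits (vieta_surjective m)
    (fun (σ : Equiv.Perm (Fin m)) s => s ∘ σ)
    (fun σ => IsOpenMap.of_inverse (f' := fun s => s ∘ σ.symm) (by fun_prop)
      (fun s => by ext; simp) (fun s => by ext; simp))
    (fun σ s => vieta_comp_perm s σ)
    fun _ _ h => exists_perm_of_vieta_eq h.symm

end RootContinuity

theorem exists_full_root_set_continuousAt_general (m : ℕ) (M₀ : Fin m → ℂ) :
    ∃ lam : Fin m → (Fin m → ℂ) → ℂ,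
      (∀ i : Fin m, ContinuousAt (lam i) M₀) ∧
      ∀ M : Fin m → ℂ,
        X ^ m - ∑ j : Fin m, C (M j) * X ^ (j : ℕ) =
          ∏ i : Fin m, (X - C (lam i M)) := by
  obtain ⟨g, hg, hcont⟩ := (RootContinuity.isOpenMap_vieta m).exists_rightInverse_continuousAt
    (RootContinuity.vieta_surjective m)
    (fun M => (RootContinuity.isProperMap_vieta m).isCompact_preimage isCompact_singleton) M₀
  exact ⟨fun i M => g M i, fun i => (continuous_apply i).continuousAt.comp hcont,
    fun M => (RootContinuity.prod_X_sub_C_eq_polyOfCoeffs_iff.2 (hg M)).symm⟩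

/-- for every point `M₀ ∈ ℂ^m` there exists a full set of roots
`λ^1, …, λ^m : ℂ^m → ℂ` of the family `M ↦ λ^m - a_{m-1} λ^{m-1} - ⋯ - a_0`,
each continuous at the point `M₀`. -/
theorem exists_full_root_set_continuousAt (m : ℕ) (hm : 1 ≤ m) (M₀ : Fin m → ℂ) :
    ∃ lam : Fin m → (Fin m → ℂ) → ℂ,
      (∀ i : Fin m, ContinuousAt (lam i) M₀) ∧
      ∀ M : Fin m → ℂ,
        X ^ m - ∑ j : Fin m, C (M j) * X ^ (j : ℕ) =
          ∏ i : Fin m, (X - C (lam i M)) :=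
  exists_full_root_set_continuousAt_general m M₀
end

section
/- Let m ≥ 2. Then there is no tuple of functions λ^1, …, λ^m : ℂ^m → ℂ, all continuous on the whole space ℂ^m, such that for every M = (a_0, …, a_{m−1}) ∈ ℂ^m one has the factorization λ^m − a_{m−1}λ^{m−1} − ⋯ − a_1λ − a_0 = (λ − λ^1(M)) ⋯ (λ − λ^m(M)) as polynomials in λ. -/
/-!
Evaluating a continuous root function at the coefficient tuples `(a, 0, …, 0)`, i.e. on the
polynomials `λ^m - a`, gives a continuous `m`-th root `f` of the identity of `ℂ`. Along the loop
`t ↦ exp (2πit)` the quotient `f (exp (2πit)) / exp (2πit/m)` is continuous with values in the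
finite set of `m`-th roots of unity, hence constant; comparing `t = 0` with `t = 1` forces
`exp (2πi/m) = 1`, which is false for `m ≥ 2`.
-/

open Polynomial

section

variable {R : Type*} [CommRing R]

theorem pow_eq_sum_of_eq_prod_X_sub_C {m : ℕ} {M : Fin m → R} {r : Fin m → R}
    (h : X ^ m - ∑ j : Fin m, C (M j) * X ^ (j : ℕ) = ∏ i : Fin m, (X - C (r i)))
    (i : Fin m) :
    r i ^ m = ∑ j : Fin m, M j * r i ^ (j : ℕ) := by
  have hroot := congrArg (eval (r i)) h
  rw [eval_prod, Finset.prod_eq_zero (Finset.mem_univ i) (by simp)] at hroot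
  simpa [eval_finsetSum, sub_eq_zero] using hroot

theorem pow_eq_of_full_root_set {m : ℕ} [NeZero m] {lam : Fin m → (Fin m → R) → R}
    (hfact : ∀ M : Fin m → R,
      X ^ m - ∑ j : Fin m, C (M j) * X ^ (j : ℕ) = ∏ i : Fin m, (X - C (lam i M)))
    (i : Fin m) (a : R) : lam i (Pi.single 0 a) ^ m = a := by
  rw [pow_eq_sum_of_eq_prod_X_sub_C (hfact _) i,
    Fintype.sum_eq_single 0 fun j hj => by simp [hj]]
  simp

theorem eq_of_continuous_of_pow_eq_one [IsDomain R] [TopologicalSpace R] [T1Space R]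
    {α : Type*} [TopologicalSpace α] [PreconnectedSpace α] {m : ℕ} (hm : m ≠ 0) {g : α → R}
    (hg : Continuous g) (h : ∀ x, g x ^ m = 1) (x y : α) : g x = g y := by
  classical
  have hfin : {z : R | z ^ m = 1}.Finite :=
    (nthRoots m (1 : R)).toFinset.finite_toSet.subset fun z hz => by
      simpa [mem_nthRoots (Nat.pos_of_ne_zero hm)] using hz
  exact isPreconnected_univ.constant_of_mapsTo hfin.isDiscrete hg.continuousOn
    (fun t _ => h t) trivial trivial

end

namespace Complex

open Real

theorem not_continuous_of_pow_eq {m : ℕ} (hm : 1 < m) {f : ℂ → ℂ} (hf : ∀ z, f z ^ m = z) :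
    ¬ Continuous f := by
  intro hfc
  have hm0 : m ≠ 0 := by omega
  set g : ℝ → ℂ := fun t => f (exp (2 * π * I * t)) / exp (2 * π * I * t / m)
  have hg : Continuous g :=
    .div (hfc.comp (by fun_prop)) (by fun_prop) fun t => exp_ne_zero _
  have hg_pow : ∀ t, g t ^ m = 1 := fun t => by
    rw [div_pow, hf, ← exp_nat_mul, mul_div_cancel₀ _ (Nat.cast_ne_zero.mpr hm0),
      div_self (exp_ne_zero _)]
  have hf1 : f 1 ≠ 0 := fun h0 => by simpa [h0, hm0] using hf 1
  have hζ : exp (2 * π * I / m) = 1 := by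
    have hloop := eq_of_continuous_of_pow_eq_one hm0 hg hg_pow 0 1
    simp only [g, ofReal_zero, ofReal_one, mul_zero, mul_one, zero_div, exp_zero, div_one,
      exp_two_pi_mul_I] at hloop
    rwa [eq_div_iff (exp_ne_zero _), mul_eq_left₀ hf1] at hloop
  have hprim := isPrimitiveRoot_exp m hm0
  rw [hζ, IsPrimitiveRoot.one_left_iff] at hprim
  omega

end Complex

/-- for `m ≥ 2` there is no full set of roots
`λ^1, …, λ^m : ℂ^m → ℂ` of the family `M ↦ λ^m - a_{m-1} λ^{m-1} - ⋯ - a_0`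
with all the functions `λ^i` continuous on the whole space `ℂ^m`. -/
theorem no_globally_continuous_full_root_set (m : ℕ) (hm : 2 ≤ m) :
    ¬ ∃ lam : Fin m → (Fin m → ℂ) → ℂ,
        (∀ i : Fin m, Continuous (lam i)) ∧
        ∀ M : Fin m → ℂ,
          X ^ m - ∑ j : Fin m, C (M j) * X ^ (j : ℕ) =
            ∏ i : Fin m, (X - C (lam i M)) := by
  have : NeZero m := ⟨by omega⟩
  rintro ⟨lam, hcont, hfact⟩
  exact Complex.not_continuous_of_pow_eq hm (pow_eq_of_full_root_set hfact 0)
    ((hcont 0).comp (continuous_single (A := fun _ : Fin m => ℂ) 0))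
end
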